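/- arXiv:1606.01882 — 11 statements merged into one kernel-verified Lean document; each statement's English description precedes it below -/
import Mathlib

section
/- Let f satisfy (A1)-(A2) and the contraction/same-side condition with constant λ ∈ (0,1), let (γ_n) be a real sequence with lim_{n→∞} γ_n = 0, and let (x_n) be the solution of x_{n+1} = max{f(x_n) + γ_{n+1}, 0} with arbitrary initial value x_0 > 0. Then for any ε₀ > 0 with ε₀ < min{λK, (1−λ)K/2} there exists n₁ ∈ ℕ such that: if x_n ∈ [ε₀, 2K−ε₀] for some n ≥ n₁, then x_{n+k} ∈ [ε₀, 2K−ε₀] for every k ∈ ℕ. -/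
set_option maxHeartbeats 1000000 in
/-- Lemma `lem:add1`: under (A1)-(A2), the contraction/same-side condition and
`γ_n → 0`, for any small enough `ε₀` there is `n₁` such that once the solution of
`x_{n+1} = max{f(x_n) + γ_{n+1}, 0}` enters `[ε₀, 2K - ε₀]` at some `n ≥ n₁`,
it stays there forever. -/
theorem stmt_0 (f : ℝ → ℝ) (K lam : ℝ)
    (hf_cont : ContinuousOn f (Set.Ici 0))
    (hf_maps : ∀ x : ℝ, 0 ≤ x → 0 ≤ f x)
    (hf0 : f 0 = 0)
    (hf_pos : ∀ x : ℝ, 0 < x → 0 < f x)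
    (hK : 0 < K) (hfK : f K = K)
    (hbelow : ∀ x : ℝ, 0 < x → x < K → x < f x)
    (habove : ∀ x : ℝ, K < x → f x < x)
    (hlam : lam ∈ Set.Ioo (0 : ℝ) 1)
    (hcontr : ∀ x : ℝ, 0 < x →
      |f x - K| ≤ lam * |x - K| ∨ 0 < (f x - K) * (x - K))
    (γ : ℕ → ℝ) (hγ : Filter.Tendsto γ Filter.atTop (nhds 0))
    (x : ℕ → ℝ) (hx0 : 0 < x 0)
    (hrec : ∀ n : ℕ, x (n + 1) = max (f (x n) + γ (n + 1)) 0)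
    (ε₀ : ℝ) (hε₀ : 0 < ε₀)
    (hε₀' : ε₀ < min (lam * K) ((1 - lam) * K / 2)) :
    ∃ n₁ : ℕ, ∀ n ≥ n₁, x n ∈ Set.Icc ε₀ (2 * K - ε₀) →
      ∀ k : ℕ, x (n + k) ∈ Set.Icc ε₀ (2 * K - ε₀) := by
  obtain ⟨hlam0, hlam1⟩ := hlam
  have hεK : ε₀ < K := by
    have := lt_of_lt_of_le hε₀' (min_le_left _ _)
    nlinarith
  set a : ℝ := 2 * K - ε₀ with ha
  have hKa : K < a := by simp only [ha]; linarith
  set c : ℝ := (K - ε₀) / 2 with hc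
  have hc0 : 0 < c := by simp only [hc]; linarith
  -- the set near the right endpoint
  have hS1 : Set.Icc (a - c) a ⊆ Set.Ici (0 : ℝ) := by
    intro y hy
    have := hy.1
    simp only [ha, hc] at this ⊢
    simp only [Set.mem_Ici]; linarith
  have hS1K : ∀ y ∈ Set.Icc (a - c) a, K < y := by
    intro y hy
    have := hy.1
    simp only [ha, hc] at this; linarith
  obtain ⟨xM, hxM, hmax⟩ := isCompact_Icc.exists_isMaxOn
    (Set.nonempty_Icc.mpr (by linarith)) (hf_cont.mono hS1)
  have hgap1 : 0 < a - f xM := by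
    have h1 : f xM < xM := habove xM (hS1K xM hxM)
    have h2 : xM ≤ a := hxM.2
    linarith
  -- the set near the left endpoint
  have hS2 : Set.Icc ε₀ (ε₀ + c) ⊆ Set.Ici (0 : ℝ) := by
    intro y hy; exact le_trans hε₀.le hy.1
  have hS2K : ∀ y ∈ Set.Icc ε₀ (ε₀ + c), 0 < y ∧ y < K := by
    intro y hy
    refine ⟨lt_of_lt_of_le hε₀ hy.1, ?_⟩
    have := hy.2; simp only [hc] at this; linarith
  obtain ⟨xm, hxm, hmin⟩ := isCompact_Icc.exists_isMinOn
    (Set.nonempty_Icc.mpr (by linarith)) (hf_cont.mono hS2)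
  have hgap2 : 0 < f xm - ε₀ := by
    obtain ⟨h1, h2⟩ := hS2K xm hxm
    have := hbelow xm h1 h2
    have := hxm.1
    linarith
  -- the perturbation bound
  set δ : ℝ := min (min ((1 - lam) * (K - ε₀)) (K - ε₀))
      (min (min c (a - f xM)) (f xm - ε₀)) with hδdef
  have hδ0 : 0 < δ := by
    apply lt_min (lt_min (by nlinarith) (by linarith))
    exact lt_min (lt_min hc0 hgap1) hgap2
  have hδ1 : δ ≤ (1 - lam) * (K - ε₀) := le_trans (min_le_left _ _) (min_le_left _ _)
  have hδ2 : δ ≤ K - ε₀ := le_trans (min_le_left _ _) (min_le_right _ _)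
  have hδ3 : δ ≤ c := le_trans (min_le_right _ _) (le_trans (min_le_left _ _) (min_le_left _ _))
  have hδ4 : δ ≤ a - f xM := le_trans (min_le_right _ _) (le_trans (min_le_left _ _) (min_le_right _ _))
  have hδ5 : δ ≤ f xm - ε₀ := le_trans (min_le_right _ _) (min_le_right _ _)
  -- one-step invariance
  have key : ∀ y : ℝ, y ∈ Set.Icc ε₀ a → ∀ g : ℝ, |g| ≤ δ →
      max (f y + g) 0 ∈ Set.Icc ε₀ a := by
    intro y hy g hg
    have hy0 : 0 < y := lt_of_lt_of_le hε₀ hy.1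
    have hg1 : -δ ≤ g := neg_le_of_abs_le hg
    have hg2 : g ≤ δ := le_of_abs_le hg
    have hbounds : ε₀ ≤ f y + g ∧ f y + g ≤ a := by
      rcases hcontr y hy0 with hcase | hcase
      · -- contraction case
        have hyK : |y - K| ≤ K - ε₀ := by
          rw [abs_le]
          constructor
          · linarith [hy.1]
          · have := hy.2; simp only [ha] at this; linarith
        have h1 : |f y - K| ≤ lam * (K - ε₀) := by
          calc |f y - K| ≤ lam * |y - K| := hcase
            _ ≤ lam * (K - ε₀) := by nlinarith [abs_nonneg (y - K)]
        rw [abs_le] at h1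
        constructor
        · nlinarith
        · simp only [ha]; nlinarith
      · -- same-side case
        rcases lt_trichotomy y K with hyK | hyK | hyK
        · -- y < K, so f y < K and f y > whatever
          have hfyK : f y < K := by nlinarith
          constructor
          · by_cases hylow : ε₀ + δ ≤ y
            · have := hbelow y hy0 hyK
              linarith
            · push_neg at hylow
              have hyS : y ∈ Set.Icc ε₀ (ε₀ + c) := ⟨hy.1, by linarith⟩
              have := hmin hyS
              simp only [Set.mem_setOf_eq] at this
              linarith
          · simp only [ha]; linarith
        · exfalso; rw [hyK] at hcase; simp at hcase
        · -- y > K, so f y > K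
          have hfyK : K < f y := by nlinarith
          constructor
          · linarith
          · by_cases hyhigh : y ≤ a - δ
            · have := habove y hyK
              linarith
            · push_neg at hyhigh
              have hyS : y ∈ Set.Icc (a - c) a := ⟨by linarith, hy.2⟩
              have := hmax hyS
              simp only [Set.mem_setOf_eq] at this
              linarith
    have hpos : (0 : ℝ) ≤ f y + g := le_trans hε₀.le hbounds.1
    rw [max_eq_left hpos]
    exact ⟨hbounds.1, hbounds.2⟩
  -- choose n₁
  have hγ' : ∀ᶠ m in Filter.atTop, |γ m| ≤ δ := by
    have := Metric.tendsto_atTop.mp hγ δ hδ0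
    obtain ⟨N, hN⟩ := this
    refine Filter.eventually_atTop.mpr ⟨N, fun m hm => ?_⟩
    have := hN m hm
    rw [Real.dist_eq, sub_zero] at this
    exact this.le
  obtain ⟨n₁, hn₁⟩ := Filter.eventually_atTop.mp hγ'
  refine ⟨n₁, fun n hn hmem k => ?_⟩
  induction k with
  | zero => simpa using hmem
  | succ k ih =>
    have hrec' := hrec (n + k)
    have : x (n + (k + 1)) = max (f (x (n + k)) + γ (n + k + 1)) 0 := by
      rw [show n + (k + 1) = (n + k) + 1 from rfl, hrec']
    rw [this]
    exact key (x (n + k)) ih (γ (n + k + 1)) (hn₁ (n + k + 1) (by omega))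
end

section
/- Let f satisfy (A1)-(A2), the contraction/same-side condition with constant λ ∈ (0,1), and liminf_{x→∞}(x − f(x)) > 0; let (γ_n) be a real sequence with lim_{n→∞} γ_n = 0, and let ε₀ > 0 satisfy ε₀ < min{λK, (1−λ)K/2}. Then for any solution (x_n) of x_{n+1} = max{f(x_n) + γ_{n+1}, 0} with positive initial value there exists n₂ ∈ ℕ such that x_n ≤ 2K − ε₀ for all n ≥ n₂. -/
/-- Lemma `lem:add2`: eventually the solution stays below `2K - ε₀`. -/
theorem stmt_1 (f : ℝ → ℝ) (K lam : ℝ)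
    (hf_cont : ContinuousOn f (Set.Ici 0))
    (hf_maps : ∀ x : ℝ, 0 ≤ x → 0 ≤ f x)
    (hf0 : f 0 = 0)
    (hf_pos : ∀ x : ℝ, 0 < x → 0 < f x)
    (hK : 0 < K) (hfK : f K = K)
    (hbelow : ∀ x : ℝ, 0 < x → x < K → x < f x)
    (habove : ∀ x : ℝ, K < x → f x < x)
    (hlam : lam ∈ Set.Ioo (0 : ℝ) 1)
    (hcontr : ∀ x : ℝ, 0 < x →
      |f x - K| ≤ lam * |x - K| ∨ 0 < (f x - K) * (x - K))
    (hliminf : 0 < Filter.liminf (fun y : ℝ => y - f y) Filter.atTop)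
    (γ : ℕ → ℝ) (hγ : Filter.Tendsto γ Filter.atTop (nhds 0))
    (x : ℕ → ℝ) (hx0 : 0 < x 0)
    (hrec : ∀ n : ℕ, x (n + 1) = max (f (x n) + γ (n + 1)) 0)
    (ε₀ : ℝ) (hε₀ : 0 < ε₀)
    (hε₀' : ε₀ < min (lam * K) ((1 - lam) * K / 2)) :
    ∃ n₂ : ℕ, ∀ n ≥ n₂, x n ≤ 2 * K - ε₀ := by
  obtain ⟨hlam0, hlam1⟩ := hlam
  have hε₀K : ε₀ < (1 - lam) * K / 2 := lt_of_lt_of_le hε₀' (min_le_right _ _)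
  have hε₀lamK : ε₀ < lam * K := lt_of_lt_of_le hε₀' (min_le_left _ _)
  set T : ℝ := 2 * K - ε₀ with hTdef
  have hTK : K < T := by simp only [hTdef]; nlinarith
  have hT0 : 0 < T := lt_trans hK hTK
  -- nonnegativity of the orbit
  have hxnn : ∀ n, 0 ≤ x n := by
    intro n
    cases n with
    | zero => exact hx0.le
    | succ n => rw [hrec]; exact le_max_right _ _
  -- f y < T on [0, T]
  have hfltT : ∀ y : ℝ, 0 ≤ y → y ≤ T → f y < T := by
    intro y hy0 hyT
    rcases eq_or_lt_of_le hy0 with h | h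
    · rw [← h, hf0]; exact hT0
    rcases le_or_gt y K with hyK | hyK
    · rcases eq_or_lt_of_le hyK with h2 | h2
      · rw [h2, hfK]; exact hTK
      rcases hcontr y h with hc | hc
      · have h3 := (abs_le.mp hc).2
        have h4 : |y - K| = K - y := by rw [abs_of_nonpos (by linarith)]; ring
        rw [h4] at h3
        simp only [hTdef]; nlinarith
      · have : f y < K := by nlinarith
        exact this.trans hTK
    · rcases hcontr y h with hc | hc
      · have h3 := (abs_le.mp hc).2
        have h4 : |y - K| = y - K := abs_of_nonneg (by linarith)
        rw [h4] at h3
        simp only [hTdef] at hyT ⊢; nlinarith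
      · exact lt_of_lt_of_le (habove y hyK) hyT
  -- max of f on [0,T]
  have hsub : Set.Icc (0:ℝ) T ⊆ Set.Ici 0 := fun y hy => hy.1
  obtain ⟨z, hzmem, hzmax⟩ := isCompact_Icc.exists_isMaxOn
    ⟨0, Set.left_mem_Icc.mpr hT0.le⟩ (hf_cont.mono hsub)
  have hzmax' : ∀ y ∈ Set.Icc (0:ℝ) T, f y ≤ f z := isMaxOn_iff.mp hzmax
  have hfz : f z < T := hfltT z hzmem.1 hzmem.2
  -- liminf extraction
  have hLset : ∃ a > (0:ℝ), ∀ᶠ y in Filter.atTop, a ≤ y - f y := by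
    rw [Filter.liminf_eq] at hliminf
    set S := {a : ℝ | ∀ᶠ y in Filter.atTop, a ≤ y - f y} with hSdef
    have hSne : S.Nonempty := by
      by_contra h
      rw [Set.not_nonempty_iff_eq_empty] at h
      rw [h, Real.sSup_empty] at hliminf
      exact lt_irrefl 0 hliminf
    obtain ⟨a, haS, ha⟩ := exists_lt_of_lt_csSup hSne hliminf
    exact ⟨a, ha, haS⟩
  obtain ⟨a, ha0, haev⟩ := hLset
  obtain ⟨M, hM⟩ := Filter.eventually_atTop.mp haev
  set M' : ℝ := max M T with hM'def
  have hTM' : T ≤ M' := le_max_right _ _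
  -- min of y - f y on [T, M']
  have hsub2 : Set.Icc T M' ⊆ Set.Ici 0 := fun y hy => le_trans hT0.le hy.1
  obtain ⟨w, hwmem, hwmin⟩ := isCompact_Icc.exists_isMinOn
    ⟨T, Set.left_mem_Icc.mpr hTM'⟩
    (continuousOn_id.sub (hf_cont.mono hsub2))
  have hwmin' : ∀ y ∈ Set.Icc T M', w - f w ≤ y - f y := by
    intro y hy; exact isMinOn_iff.mp hwmin y hy
  have hwpos : 0 < w - f w := by
    have : K < w := lt_of_lt_of_le hTK hwmem.1
    linarith [habove w this]
  set c : ℝ := min a (w - f w) with hcdef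
  have hc0 : 0 < c := lt_min ha0 hwpos
  -- uniform decrease for y ≥ T
  have hdec : ∀ y : ℝ, T ≤ y → c ≤ y - f y := by
    intro y hy
    rcases le_or_gt y M' with h | h
    · exact le_trans (min_le_right _ _) (hwmin' y ⟨hy, h⟩)
    · exact le_trans (min_le_left _ _) (hM y (le_of_lt (lt_of_le_of_lt (le_max_left M T) h)))
  set δ : ℝ := min (T - f z) (c / 2) with hδdef
  have hδ0 : 0 < δ := lt_min (by linarith) (by linarith)
  obtain ⟨N, hN⟩ := Metric.tendsto_atTop.mp hγ δ hδ0
  have hγN : ∀ n ≥ N, |γ n| ≤ δ := by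
    intro n hn
    have := hN n hn
    rw [Real.dist_eq, sub_zero] at this
    exact this.le
  -- invariance
  have hinv : ∀ n, N ≤ n → x n ≤ T → x (n + 1) ≤ T := by
    intro n hn hxn
    rw [hrec]
    have h1 : f (x n) ≤ f z := hzmax' (x n) ⟨hxnn n, hxn⟩
    have h2 : γ (n + 1) ≤ δ := (abs_le.mp (hγN (n + 1) (by omega))).2
    have h3 : δ ≤ T - f z := min_le_left _ _
    exact max_le (by linarith) hT0.le
  -- entering
  have henter : ∃ m, N ≤ m ∧ x m ≤ T := by
    by_contra h
    push_neg at h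
    have hstep : ∀ k : ℕ, x (N + k) ≤ x N - k * (c / 2) := by
      intro k
      induction k with
      | zero => simp
      | succ k ih =>
        have hxk : T < x (N + k) := h _ (Nat.le_add_right N k)
        have hfd : c ≤ x (N + k) - f (x (N + k)) := hdec _ hxk.le
        have hγk := (abs_le.mp (hγN (N + k + 1) (by omega))).2
        have hδc : δ ≤ c / 2 := min_le_right _ _
        have hx1 : T < x (N + k + 1) := h _ (by omega)
        have heq : x (N + k + 1) = max (f (x (N + k)) + γ (N + k + 1)) 0 := hrec (N + k)
        have hkey : x (N + k + 1) ≤ x (N + k) - c / 2 := by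
          rcases max_cases (f (x (N + k)) + γ (N + k + 1)) 0 with ⟨he, _⟩ | ⟨he, _⟩
          · rw [heq, he]; linarith
          · exfalso; rw [heq, he] at hx1; linarith
        have hidx : N + (k + 1) = N + k + 1 := rfl
        rw [hidx]
        push_cast
        push_cast at ih
        linarith
    obtain ⟨k, hk⟩ := exists_nat_gt ((x N - T) / (c / 2))
    have hk' : x N - T < k * (c / 2) := by
      rw [div_lt_iff₀ (by linarith)] at hk
      linarith
    have := hstep k
    have hxk : T < x (N + k) := h _ (Nat.le_add_right N k)
    linarith
  obtain ⟨m, hmN, hmT⟩ := henter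
  refine ⟨m, fun n hn => ?_⟩
  obtain ⟨k, rfl⟩ := Nat.exists_eq_add_of_le hn
  clear hn
  induction k with
  | zero => exact hmT
  | succ k ih =>
    have : x (m + k) ≤ T := ih
    exact hinv (m + k) (by omega) this
end

section
/- Let f satisfy (A1)-(A2), the contraction/same-side condition with constant λ ∈ (0,1), and liminf_{x→∞}(x − f(x)) > 0; let (γ_n) be a real sequence with lim_{n→∞} γ_n = 0. Let (x_n) be the solution of x_{n+1} = max{f(x_n) + γ_{n+1}, 0} with arbitrary initial value x_0 > 0, and suppose σ₁ > 0 is such that limsup_{n→∞} x_n ≥ σ₁. Then there exist ε₀ > 0 satisfying ε₀ < min{λK, (1−λ)K/2} and n₀ ∈ ℕ such that x_n ∈ [ε₀, 2K−ε₀] for every n ≥ n₀. -/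
/-!
Away from the compact core, `y - f y` stays above the positive `liminf`; on the core, the
strict inequality `f y < max (2K - ε) y` (coming from the contraction/same-side condition
near `K` and from `f y < y` above `K`) is uniform by compactness. Once the perturbations
are small the orbit therefore loses a fixed amount per step while above `2K - ε`, and can
never climb above it again. Similarly `f > ε` on the compact interval `[ε, 2K - ε]`,
uniformly, so this interval is eventually forward invariant; the orbit enters it because
it is frequently above `σ₁ / 2 ≥ ε`.
-/

open Filter Set Topology

def ContractsOrSameSide (f : ℝ → ℝ) (K lam : ℝ) : Prop :=
  ∀ x : ℝ, 0 < x → |f x - K| ≤ lam * |x - K| ∨ 0 < (f x - K) * (x - K)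

theorem eventually_of_frequently_of_eventually_imp_succ {p : ℕ → Prop}
    (hfreq : ∃ᶠ n in atTop, p n) (hstep : ∀ᶠ n in atTop, p n → p (n + 1)) :
    ∀ᶠ n in atTop, p n := by
  obtain ⟨N, hN⟩ := eventually_atTop.1 hstep
  obtain ⟨n₀, hn₀N, hn₀⟩ := frequently_atTop.1 hfreq N
  refine eventually_atTop.2 ⟨n₀, fun n hn => ?_⟩
  induction n, hn using Nat.le_induction with
  | base => exact hn₀
  | succ n hn ih => exact hN n (by omega) ih

section Drift

variable {u : ℕ → ℝ} {b d : ℝ}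

theorem frequently_le_of_eventually_le_max_sub (hd : 0 < d)
    (h : ∀ᶠ n in atTop, u (n + 1) ≤ max b (u n - d)) : ∃ᶠ n in atTop, u n ≤ b := by
  simp only [Filter.Frequently, not_le]
  intro hgt
  obtain ⟨N, hN⟩ := eventually_atTop.1 (h.and hgt)
  have hdesc : ∀ k : ℕ, u (N + k) ≤ u N - k * d := by
    intro k
    induction k with
    | zero => simp
    | succ k ih =>
      have hstep : u (N + k + 1) ≤ u (N + k) - d :=
        ((le_max_iff.1 (hN (N + k) (by omega)).1).resolve_left
          (not_le.2 (hN (N + k + 1) (by omega)).2))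
      rw [← add_assoc]
      push_cast
      linarith
  obtain ⟨k, hk⟩ := exists_nat_gt ((u N - b) / d)
  rw [div_lt_iff₀ hd] at hk
  linarith [hdesc k, (hN (N + k) (by omega)).2]

theorem eventually_le_of_eventually_le_max_sub (hd : 0 < d)
    (h : ∀ᶠ n in atTop, u (n + 1) ≤ max b (u n - d)) : ∀ᶠ n in atTop, u n ≤ b :=
  eventually_of_frequently_of_eventually_imp_succ (frequently_le_of_eventually_le_max_sub hd h)
    (h.mono fun _ hn hle => hn.trans (max_le le_rfl (by linarith)))

end Drift

theorem exists_pos_eventually_lt_of_pos_liminf {α : Type*} {l : Filter α} {g : α → ℝ}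
    (h : 0 < liminf g l) : ∃ c > 0, ∀ᶠ a in l, c < g a := by
  -- in `ℝ`, the `liminf` of a function that is not bounded below is the junk value `0`
  have hbdd : IsBoundedUnder (· ≥ ·) l g := by
    by_contra hbdd
    exact h.ne' (Real.liminf_of_not_isBoundedUnder hbdd)
  exact ⟨_, half_pos h, eventually_lt_of_lt_liminf (half_lt_self h) hbdd⟩

theorem exists_pos_le_max_sub_of_lt_max {f : ℝ → ℝ} {U : ℝ} (hf : ContinuousOn f (Ici 0))
    (hlt : ∀ y, 0 ≤ y → f y < max U y)
    (hliminf : 0 < liminf (fun y => y - f y) atTop) :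
    ∃ d > 0, ∀ y, 0 ≤ y → f y ≤ max U y - d := by
  obtain ⟨c, hc, hfar⟩ := exists_pos_eventually_lt_of_pos_liminf hliminf
  obtain ⟨M, hM⟩ := eventually_atTop.1 hfar
  obtain ⟨d, hd, hcore⟩ := (isCompact_Icc (a := 0) (b := M)).exists_forall_le'
    (f := fun y => max U y - f y)
    ((continuous_const.max continuous_id).continuousOn.sub (hf.mono Icc_subset_Ici_self))
    (a := 0) (fun y hy => sub_pos.2 (hlt y hy.1))
  refine ⟨min d c, lt_min hd hc, fun y hy => ?_⟩
  rcases le_total y M with hyM | hMy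
  · linarith [hcore y ⟨hy, hyM⟩, min_le_left d c]
  · linarith [hM y hMy, le_max_right U y, min_le_right d c]

section SameSide

variable {f : ℝ → ℝ} {K lam : ℝ}

theorem ContractsOrSameSide.le_one_add_mul (hcontr : ContractsOrSameSide f K lam)
    (hlam : 0 ≤ lam) {y : ℝ} (hy : 0 < y) (hyK : y ≤ K) : f y ≤ (1 + lam) * K := by
  rcases hcontr y hy with h | h
  · rw [abs_of_nonpos (sub_nonpos.2 hyK)] at h
    nlinarith [(abs_le.1 h).2]
  · rcases pos_and_pos_or_neg_and_neg_of_mul_pos h with ⟨-, hKy⟩ | ⟨hfy, -⟩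
    · linarith
    · nlinarith [mul_nonneg hlam (hy.le.trans hyK)]

theorem ContractsOrSameSide.one_sub_mul_le (hcontr : ContractsOrSameSide f K lam)
    (hlam : 0 ≤ lam) (hK : 0 < K) {y : ℝ} (hKy : K ≤ y) (hy : y ≤ 2 * K) :
    (1 - lam) * K ≤ f y := by
  rcases hcontr y (hK.trans_le hKy) with h | h
  · rw [abs_of_nonneg (sub_nonneg.2 hKy)] at h
    nlinarith [(abs_le.1 h).1]
  · rcases pos_and_pos_or_neg_and_neg_of_mul_pos h with ⟨hfy, -⟩ | ⟨-, hyK⟩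
    · nlinarith
    · linarith

theorem ContractsOrSameSide.lt_max (hcontr : ContractsOrSameSide f K lam) (hf0 : f 0 = 0)
    (habove : ∀ y, K < y → f y < y) (hlam : 0 ≤ lam) (hK : 0 < K) {ε : ℝ}
    (hε : ε < (1 - lam) * K) {y : ℝ} (hy : 0 ≤ y) : f y < max (2 * K - ε) y := by
  rcases hy.eq_or_lt with rfl | hy
  · rw [hf0]
    exact lt_max_of_lt_left (by nlinarith [mul_nonneg hlam hK.le])
  rcases le_or_gt y K with hyK | hKy
  · exact lt_max_of_lt_left (by linarith [hcontr.le_one_add_mul hlam hy hyK])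
  · exact lt_max_of_lt_right (habove y hKy)

theorem ContractsOrSameSide.lt_of_mem_Icc (hcontr : ContractsOrSameSide f K lam)
    (hbelow : ∀ y, 0 < y → y < K → y < f y) (hlam : 0 ≤ lam) (hK : 0 < K) {ε : ℝ}
    (hε0 : 0 < ε) (hε : ε < (1 - lam) * K) {y : ℝ} (hy : y ∈ Icc ε (2 * K - ε)) :
    ε < f y := by
  rcases lt_or_ge y K with hyK | hKy
  · exact hy.1.trans_lt (hbelow y (hε0.trans_le hy.1) hyK)
  · exact hε.trans_le (hcontr.one_sub_mul_le hlam hK hKy (by linarith [hy.2]))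

end SameSide

section Orbit

variable {f : ℝ → ℝ} {γ x : ℕ → ℝ}

theorem orbit_nonneg (hrec : ∀ n, x (n + 1) = max (f (x n) + γ (n + 1)) 0) (hx0 : 0 ≤ x 0) :
    ∀ n, 0 ≤ x n
  | 0 => hx0
  | n + 1 => (hrec n).symm ▸ le_max_right _ _

theorem orbit_eventually_succ_le_max_sub (hrec : ∀ n, x (n + 1) = max (f (x n) + γ (n + 1)) 0)
    (hγ : Tendsto γ atTop (𝓝 0)) (hx : ∀ n, 0 ≤ x n) {U d : ℝ} (hU : 0 ≤ U) (hd : 0 < d)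
    (hfd : ∀ y, 0 ≤ y → f y ≤ max U y - d) :
    ∀ᶠ n in atTop, x (n + 1) ≤ max U (x n - d / 2) := by
  filter_upwards [((tendsto_add_atTop_iff_nat 1).2 hγ).eventually
    (eventually_lt_nhds (half_pos hd))] with n hn
  rw [hrec]
  refine max_le ?_ (le_max_of_le_left hU)
  calc f (x n) + γ (n + 1) ≤ max U (x n) - d + d / 2 := add_le_add (hfd _ (hx n)) hn.le
    _ = max (U - d / 2) (x n - d / 2) := by rw [max_sub_sub_right]; ring
    _ ≤ max U (x n - d / 2) := max_le_max (by linarith) le_rfl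

theorem orbit_eventually_le_succ (hrec : ∀ n, x (n + 1) = max (f (x n) + γ (n + 1)) 0)
    (hγ : Tendsto γ atTop (𝓝 0)) {s : Set ℝ} {ε μ : ℝ} (hμ : ε < μ)
    (hfμ : ∀ y ∈ s, μ ≤ f y) : ∀ᶠ n in atTop, x n ∈ s → ε ≤ x (n + 1) := by
  filter_upwards [((tendsto_add_atTop_iff_nat 1).2 hγ).eventually
    (eventually_gt_nhds (sub_neg.2 hμ))] with n hn hxs
  rw [hrec]
  exact le_max_of_le_left (by linarith [hfμ _ hxs])

end Orbit

theorem stmt_2_general (f : ℝ → ℝ) (K lam : ℝ)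
    (hf_cont : ContinuousOn f (Set.Ici 0))
    (hf0 : f 0 = 0)
    (hK : 0 < K)
    (hbelow : ∀ x : ℝ, 0 < x → x < K → x < f x)
    (habove : ∀ x : ℝ, K < x → f x < x)
    (hlam : lam ∈ Set.Ioo (0 : ℝ) 1)
    (hcontr : ∀ x : ℝ, 0 < x →
      |f x - K| ≤ lam * |x - K| ∨ 0 < (f x - K) * (x - K))
    (hliminf : 0 < Filter.liminf (fun y : ℝ => y - f y) Filter.atTop)
    (γ : ℕ → ℝ) (hγ : Filter.Tendsto γ Filter.atTop (nhds 0))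
    (x : ℕ → ℝ) (hx0 : 0 < x 0)
    (hrec : ∀ n : ℕ, x (n + 1) = max (f (x n) + γ (n + 1)) 0)
    (σ₁ : ℝ) (hσ₁ : 0 < σ₁)
    (hlimsup : σ₁ ≤ Filter.limsup x Filter.atTop) :
    ∃ ε₀ : ℝ, 0 < ε₀ ∧ ε₀ < min (lam * K) ((1 - lam) * K / 2) ∧
      ∃ n₀ : ℕ, ∀ n ≥ n₀, x n ∈ Set.Icc ε₀ (2 * K - ε₀) := by
  have hcontr : ContractsOrSameSide f K lam := hcontr
  obtain ⟨hlam0, hlam1⟩ := hlam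
  obtain ⟨ε, hε0, hε⟩ := exists_between
    (lt_min (lt_min (mul_pos hlam0 hK) (half_pos (mul_pos (sub_pos.2 hlam1) hK))) (half_pos hσ₁))
  obtain ⟨hεmin, hεσ⟩ := lt_min_iff.1 hε
  have hεK : ε < (1 - lam) * K := by linarith [min_le_right (lam * K) ((1 - lam) * K / 2)]
  have hx := orbit_nonneg hrec hx0.le
  obtain ⟨d, hd, hfd⟩ := exists_pos_le_max_sub_of_lt_max hf_cont
    (fun y hy => hcontr.lt_max hf0 habove hlam0.le hK hεK hy) hliminf
  obtain ⟨μ, hμ, hfμ⟩ := isCompact_Icc.exists_forall_le'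
    (hf_cont.mono fun y hy => hε0.le.trans hy.1)
    (fun y hy => hcontr.lt_of_mem_Icc hbelow hlam0.le hK hε0 hεK hy)
  have hup := orbit_eventually_succ_le_max_sub hrec hγ hx (by linarith [mul_pos hlam0 hK]) hd hfd
  have hxU := eventually_le_of_eventually_le_max_sub (half_pos hd) hup
  have hfreq : ∃ᶠ n in atTop, x n ∈ Icc ε (2 * K - ε) :=
    ((frequently_lt_of_lt_limsup (b := σ₁ / 2) (isCoboundedUnder_le_of_le atTop hx)
      (by linarith)).and_eventually hxU).mono fun n hn => ⟨by linarith [hn.1], hn.2⟩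
  have hinv : ∀ᶠ n in atTop, x n ∈ Icc ε (2 * K - ε) → x (n + 1) ∈ Icc ε (2 * K - ε) := by
    filter_upwards [hup, orbit_eventually_le_succ hrec hγ hμ hfμ] with n hn hlow hxn
    exact ⟨hlow hxn, hn.trans (max_le le_rfl (by linarith [hxn.2]))⟩
  exact ⟨ε, hε0, hεmin,
    eventually_atTop.1 (eventually_of_frequently_of_eventually_imp_succ hfreq hinv)⟩

/-- Lemma `lem:add3`: if `limsup x_n ≥ σ₁ > 0`, the solution eventually stays in `[ε₀, 2K - ε₀]`. -/
theorem stmt_2 (f : ℝ → ℝ) (K lam : ℝ)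
    (hf_cont : ContinuousOn f (Set.Ici 0))
    (hf_maps : ∀ x : ℝ, 0 ≤ x → 0 ≤ f x)
    (hf0 : f 0 = 0)
    (hf_pos : ∀ x : ℝ, 0 < x → 0 < f x)
    (hK : 0 < K) (hfK : f K = K)
    (hbelow : ∀ x : ℝ, 0 < x → x < K → x < f x)
    (habove : ∀ x : ℝ, K < x → f x < x)
    (hlam : lam ∈ Set.Ioo (0 : ℝ) 1)
    (hcontr : ∀ x : ℝ, 0 < x →
      |f x - K| ≤ lam * |x - K| ∨ 0 < (f x - K) * (x - K))
    (hliminf : 0 < Filter.liminf (fun y : ℝ => y - f y) Filter.atTop)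
    (γ : ℕ → ℝ) (hγ : Filter.Tendsto γ Filter.atTop (nhds 0))
    (x : ℕ → ℝ) (hx0 : 0 < x 0)
    (hrec : ∀ n : ℕ, x (n + 1) = max (f (x n) + γ (n + 1)) 0)
    (σ₁ : ℝ) (hσ₁ : 0 < σ₁)
    (hlimsup : σ₁ ≤ Filter.limsup x Filter.atTop) :
    ∃ ε₀ : ℝ, 0 < ε₀ ∧ ε₀ < min (lam * K) ((1 - lam) * K / 2) ∧
      ∃ n₀ : ℕ, ∀ n ≥ n₀, x n ∈ Set.Icc ε₀ (2 * K - ε₀) :=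
  stmt_2_general f K lam hf_cont hf0 hK hbelow habove hlam hcontr hliminf γ hγ x hx0 hrec σ₁ hσ₁
    hlimsup
end

section
/- Let f satisfy (A1)-(A2), the contraction/same-side condition with constant λ ∈ (0,1), and liminf_{x→∞}(x − f(x)) > 0; let (γ_n) be a real sequence with lim_{n→∞} γ_n = 0. Then any solution (x_n) of x_{n+1} = max{f(x_n) + γ_{n+1}, 0} with x_0 > 0 either tends to zero, or there exist ε₀ > 0 satisfying ε₀ < min{λK, (1−λ)K/2} and n₀ ∈ ℕ such that x_n ∈ [ε₀, 2K−ε₀] for all n ≥ n₀. -/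
open Filter Set

/-- From a positive liminf at infinity we can extract a uniform eventual lower bound. -/
lemma liminf_pos_aux {u : ℝ → ℝ} (h : 0 < Filter.liminf u Filter.atTop) :
    ∃ a : ℝ, 0 < a ∧ ∃ M : ℝ, ∀ y : ℝ, M ≤ y → a ≤ u y := by
  rw [Filter.liminf_eq] at h
  by_contra hc
  push_neg at hc
  have hS : ∀ a ∈ {a : ℝ | ∀ᶠ n in Filter.atTop, a ≤ u n}, a ≤ 0 := by
    intro a ha
    by_contra h'
    push_neg at h'
    obtain ⟨M, hM⟩ := Filter.eventually_atTop.mp ha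
    obtain ⟨y, hy, hy'⟩ := hc a h' M
    exact absurd (hM y hy) (not_le.mpr hy')
  rcases Set.eq_empty_or_nonempty {a : ℝ | ∀ᶠ n in Filter.atTop, a ≤ u n} with he | hne
  · rw [he, Real.sSup_empty] at h; exact lt_irrefl 0 h
  · exact absurd (csSup_le hne hS) (not_le.mpr h)

set_option maxHeartbeats 1000000 in
/-- Corollary `cor1`: any solution either tends to zero or eventually stays in `[ε₀, 2K - ε₀]`. -/
theorem stmt_3 (f : ℝ → ℝ) (K lam : ℝ)
    (hf_cont : ContinuousOn f (Set.Ici 0))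
    (hf_maps : ∀ x : ℝ, 0 ≤ x → 0 ≤ f x)
    (hf0 : f 0 = 0)
    (hf_pos : ∀ x : ℝ, 0 < x → 0 < f x)
    (hK : 0 < K) (hfK : f K = K)
    (hbelow : ∀ x : ℝ, 0 < x → x < K → x < f x)
    (habove : ∀ x : ℝ, K < x → f x < x)
    (hlam : lam ∈ Set.Ioo (0 : ℝ) 1)
    (hcontr : ∀ x : ℝ, 0 < x →
      |f x - K| ≤ lam * |x - K| ∨ 0 < (f x - K) * (x - K))
    (hliminf : 0 < Filter.liminf (fun y : ℝ => y - f y) Filter.atTop)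
    (γ : ℕ → ℝ) (hγ : Filter.Tendsto γ Filter.atTop (nhds 0))
    (x : ℕ → ℝ) (hx0 : 0 < x 0)
    (hrec : ∀ n : ℕ, x (n + 1) = max (f (x n) + γ (n + 1)) 0)
     :
    Filter.Tendsto x Filter.atTop (nhds 0) ∨
      ∃ ε₀ : ℝ, 0 < ε₀ ∧ ε₀ < min (lam * K) ((1 - lam) * K / 2) ∧
        ∃ n₀ : ℕ, ∀ n ≥ n₀, x n ∈ Set.Icc ε₀ (2 * K - ε₀) := by
  obtain ⟨hl0, hl1⟩ := hlam
  set ε : ℝ := min (lam * K) ((1 - lam) * K / 2) / 2 with hεdef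
  have hmin : 0 < min (lam * K) ((1 - lam) * K / 2) := by
    apply lt_min (mul_pos hl0 hK); nlinarith
  have hε : 0 < ε := by positivity
  have hεlt : ε < min (lam * K) ((1 - lam) * K / 2) := by
    rw [hεdef]; linarith
  have hε4 : ε ≤ (1 - lam) * K / 4 := by
    have := min_le_right (lam * K) ((1 - lam) * K / 2)
    rw [hεdef]; linarith
  have hεK : ε < K := by nlinarith
  have h2K : ε < 2 * K - ε := by linarith
  -- pointwise strict bounds on the interval I = [ε, 2K - ε]
  have hA : ∀ y ∈ Set.Icc ε (2 * K - ε), ε < f y ∧ f y < 2 * K - ε := by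
    rintro y ⟨hy1, hy2⟩
    have hy0 : 0 < y := lt_of_lt_of_le hε hy1
    rcases lt_trichotomy y K with hyK | hyK | hyK
    · rcases hcontr y hy0 with hc | hc
      · have habs : |y - K| = K - y := by rw [abs_of_neg (by linarith)]; ring
        rw [habs] at hc
        obtain ⟨hc1, hc2⟩ := abs_le.mp hc
        constructor <;> nlinarith
      · have hfy : f y < K := by nlinarith
        exact ⟨lt_of_le_of_lt hy1 (hbelow y hy0 hyK), by linarith⟩
    · rw [hyK, hfK]; exact ⟨hεK, by linarith⟩
    · rcases hcontr y hy0 with hc | hc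
      · have habs : |y - K| = y - K := by rw [abs_of_pos (by linarith)]
        rw [habs] at hc
        obtain ⟨hc1, hc2⟩ := abs_le.mp hc
        constructor <;> nlinarith
      · have hfy : K < f y := by nlinarith
        exact ⟨by linarith, lt_of_lt_of_le (habove y hyK) hy2⟩
  -- compactness: a uniform margin δ on I
  have hInn : ε ∈ Set.Icc ε (2 * K - ε) := ⟨le_refl _, h2K.le⟩
  have hIsub : Set.Icc ε (2 * K - ε) ⊆ Set.Ici (0 : ℝ) := fun y hy =>
    le_trans hε.le hy.1
  have hfcI : ContinuousOn f (Set.Icc ε (2 * K - ε)) := hf_cont.mono hIsub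
  obtain ⟨p, hpI, hpmin⟩ := isCompact_Icc.exists_isMinOn ⟨ε, hInn⟩ hfcI
  obtain ⟨q, hqI, hqmax⟩ := isCompact_Icc.exists_isMaxOn ⟨ε, hInn⟩ hfcI
  set δ : ℝ := min (f p - ε) (2 * K - ε - f q) with hδdef
  have hδpos : 0 < δ := lt_min (by linarith [(hA p hpI).1]) (by linarith [(hA q hqI).2])
  have hInv : ∀ y ∈ Set.Icc ε (2 * K - ε), ∀ g : ℝ, |g| ≤ δ →
      max (f y + g) 0 ∈ Set.Icc ε (2 * K - ε) := by
    intro y hy g hg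
    obtain ⟨hg1, hg2⟩ := abs_le.mp hg
    have h1 : f p ≤ f y := hpmin hy
    have h2 : f y ≤ f q := hqmax hy
    have hδ1 : δ ≤ f p - ε := min_le_left _ _
    have hδ2 : δ ≤ 2 * K - ε - f q := min_le_right _ _
    have hlow : ε ≤ f y + g := by linarith
    have hmax : max (f y + g) 0 = f y + g := max_eq_left (by linarith)
    rw [hmax]
    exact ⟨hlow, by linarith⟩
  -- decrease above the interval
  obtain ⟨a, ha, M0, hM0⟩ := liminf_pos_aux hliminf
  set M : ℝ := max M0 (2 * K - ε) with hMdef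
  have hMI : 2 * K - ε ≤ M := le_max_right _ _
  have hgc : ContinuousOn (fun y => y - f y) (Set.Icc (2 * K - ε) M) :=
    continuousOn_id.sub (hf_cont.mono (fun y hy => by
      simp only [Set.mem_Ici]; have := hy.1; linarith))
  obtain ⟨r, hrI, hrmin⟩ := isCompact_Icc.exists_isMinOn ⟨2 * K - ε, ⟨le_refl _, hMI⟩⟩ hgc
  have hrK : K < r := lt_of_lt_of_le (by linarith) hrI.1
  have hrpos : 0 < r - f r := by have := habove r hrK; linarith
  set η : ℝ := min (r - f r) a with hηdef
  have hηpos : 0 < η := lt_min hrpos ha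
  have hUp : ∀ y : ℝ, 2 * K - ε ≤ y → f y ≤ y - η := by
    intro y hy
    by_cases hyM : y ≤ M
    · have hle : r - f r ≤ y - f y := hrmin (⟨hy, hyM⟩ : y ∈ Set.Icc (2 * K - ε) M)
      have hη1 : η ≤ r - f r := min_le_left _ _
      linarith
    · have : M0 ≤ y := le_trans (le_max_left _ _) (le_of_not_ge hyM)
      have := hM0 y this
      have hη2 : η ≤ a := min_le_right _ _
      linarith
  -- jump bound from the region below ε
  have hC : ∀ y : ℝ, 0 ≤ y → y ≤ ε → f y ≤ (1 + lam) * K := by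
    intro y hy0 hyε
    rcases eq_or_lt_of_le hy0 with h | h
    · rw [← h, hf0]; nlinarith
    · rcases hcontr y h with hc | hc
      · have habs : |y - K| = K - y := by rw [abs_of_neg (by linarith)]; ring
        rw [habs] at hc
        obtain ⟨hc1, hc2⟩ := abs_le.mp hc
        nlinarith
      · have : f y < K := by nlinarith
        nlinarith
  -- the smallness threshold for γ
  set δ' : ℝ := min δ (min (η / 2) ((1 - lam) * K / 2)) with hδ'def
  have hδ'pos : 0 < δ' := lt_min hδpos (lt_min (by linarith) (by nlinarith))
  have hδ'δ : δ' ≤ δ := min_le_left _ _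
  have hδ'η : δ' ≤ η / 2 := le_trans (min_le_right _ _) (min_le_left _ _)
  have hδ'K : δ' ≤ (1 - lam) * K / 2 := le_trans (min_le_right _ _) (min_le_right _ _)
  obtain ⟨N, hN⟩ := Metric.tendsto_atTop.mp hγ δ' hδ'pos
  have hNγ : ∀ n, N ≤ n → |γ n| ≤ δ' := by
    intro n hn
    have := hN n hn
    rw [Real.dist_eq, sub_zero] at this
    exact this.le
  have hxnn : ∀ n, 0 ≤ x n := by
    intro n
    cases n with
    | zero => exact hx0.le
    | succ m => rw [hrec m]; exact le_max_right _ _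
  by_cases H : ∃ n, N ≤ n ∧ x n ∈ Set.Icc ε (2 * K - ε)
  · -- eventually in the interval
    right
    obtain ⟨n₀, hn₀N, hn₀⟩ := H
    refine ⟨ε, hε, hεlt, n₀, ?_⟩
    intro n hn
    induction n, hn using Nat.le_induction with
    | base => exact hn₀
    | succ n hn ih =>
      rw [hrec n]
      exact hInv _ ih _ (le_trans (hNγ (n + 1) (by omega)) hδ'δ)
  · -- tends to zero
    left
    push_neg at H
    -- Claim 1: the solution drops below ε at some time ≥ N
    have hclaim1 : ∃ m, N ≤ m ∧ x m < ε := by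
      by_contra hc
      push_neg at hc
      have hup : ∀ m, N ≤ m → 2 * K - ε < x m := by
        intro m hm
        have h1 := H m hm
        have h2 := hc m hm
        by_contra h3
        exact h1 ⟨h2, le_of_not_gt h3⟩
      have hdec : ∀ m, N ≤ m → x (m + 1) ≤ x m - η / 2 := by
        intro m hm
        have hfx : f (x m) ≤ x m - η := hUp (x m) (hup m hm).le
        have hγm : |γ (m + 1)| ≤ δ' := hNγ (m + 1) (by omega)
        have h1 : f (x m) + γ (m + 1) ≤ x m - η / 2 := by
          have := (abs_le.mp hγm).2; linarith
        by_cases hxm : 0 ≤ x m - η / 2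
        · rw [hrec m]
          calc max (f (x m) + γ (m + 1)) 0 ≤ max (x m - η / 2) 0 :=
                max_le_max h1 (le_refl _)
            _ = x m - η / 2 := max_eq_left hxm
        · exfalso
          have h2 : x (m + 1) ≤ max (x m - η / 2) 0 := by
            rw [hrec m]; exact max_le_max h1 (le_refl _)
          rw [max_eq_right (le_of_not_ge hxm)] at h2
          have := hup (m + 1) (by omega)
          linarith
      have hiter : ∀ k : ℕ, x (N + k) ≤ x N - k * (η / 2) := by
        intro k
        induction k with
        | zero => simp
        | succ k ih =>
          have := hdec (N + k) (by omega)
          have h : x (N + (k + 1)) = x (N + k + 1) := by ring_nf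
          rw [h]
          push_cast
          linarith
      obtain ⟨k, hk⟩ := exists_nat_gt ((x N) / (η / 2))
      have h1 : x N < k * (η / 2) := by
        rw [div_lt_iff₀ (by linarith)] at hk; linarith
      have h2 := hiter k
      have h3 := hup (N + k) (by omega)
      linarith
    obtain ⟨m₀, hm₀N, hm₀⟩ := hclaim1
    -- Claim 2: the solution stays below ε from time m₀ on
    have hsmall : ∀ n, m₀ ≤ n → x n < ε := by
      intro n hn
      induction n, hn using Nat.le_induction with
      | base => exact hm₀
      | succ n hn ih =>
        have hfx : f (x n) ≤ (1 + lam) * K := hC (x n) (hxnn n) ih.le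
        have hγn : |γ (n + 1)| ≤ δ' := hNγ (n + 1) (by omega)
        have h1 : f (x n) + γ (n + 1) ≤ 2 * K - ε := by
          have := (abs_le.mp hγn).2
          nlinarith
        have h2 : x (n + 1) ≤ 2 * K - ε := by
          rw [hrec n]
          exact max_le h1 (by linarith)
        have h3 := H (n + 1) (by omega)
        by_contra h4
        exact h3 ⟨le_of_not_gt h4, h2⟩
    -- Claim 3: the solution tends to zero
    by_contra hT
    have hbddabove : ∀ᶠ n in Filter.atTop, x n ≤ ε :=
      Filter.eventually_atTop.mpr ⟨m₀, fun n hn => (hsmall n hn).le⟩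
    have hbddbelow : ∀ᶠ n in Filter.atTop, (0 : ℝ) ≤ x n :=
      Filter.Eventually.of_forall hxnn
    have hBu : Filter.IsBoundedUnder (· ≤ ·) Filter.atTop x :=
      ⟨ε, Filter.eventually_map.mpr hbddabove⟩
    have hBl : Filter.IsBoundedUnder (· ≥ ·) Filter.atTop x :=
      ⟨0, Filter.eventually_map.mpr hbddbelow⟩
    have hCo : Filter.IsCoboundedUnder (· ≤ ·) Filter.atTop x :=
      hBl.isCoboundedUnder_le
    have hCo' : Filter.IsCoboundedUnder (· ≥ ·) Filter.atTop x :=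
      hBu.isCoboundedUnder_ge
    set L : ℝ := Filter.limsup x Filter.atTop with hLdef
    have hLε : L ≤ ε := Filter.limsup_le_of_le hCo hbddabove
    have hL0 : 0 < L := by
      by_contra hc
      push_neg at hc
      have h1 : (0 : ℝ) ≤ Filter.liminf x Filter.atTop :=
        Filter.le_liminf_of_le hCo' hbddbelow
      have h2 : Filter.liminf x Filter.atTop ≤ L := Filter.liminf_le_limsup hBu hBl
      have h3 : Filter.liminf x Filter.atTop = 0 := le_antisymm (le_trans h2 hc) h1
      have h4 : L = 0 := le_antisymm hc (h3 ▸ h2)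
      exact hT (tendsto_of_liminf_eq_limsup h3 h4 hBu hBl)
    have hfreq : ∀ k : ℕ, ∃ᶠ n in Filter.atTop,
        L - 1 / (k + 1) < x n ∧ x n < L + 1 / (k + 1) := by
      intro k
      have hk : (0 : ℝ) < 1 / (k + 1) := by positivity
      exact (Filter.frequently_lt_of_lt_limsup hCo (by linarith)).and_eventually
        (Filter.eventually_lt_of_limsup_lt (by linarith) hBu)
    obtain ⟨φ, hφmono, hφ⟩ := Filter.extraction_forall_of_frequently hfreq
    have hone : Filter.Tendsto (fun k : ℕ => 1 / ((k : ℝ) + 1)) Filter.atTop (nhds 0) :=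
      tendsto_one_div_add_atTop_nhds_zero_nat
    have htlow : Filter.Tendsto (fun k : ℕ => L - 1 / ((k : ℝ) + 1)) Filter.atTop (nhds L) := by
      have h := (tendsto_const_nhds : Filter.Tendsto (fun _ : ℕ => L) Filter.atTop (nhds L))
      simpa using h.sub hone
    have hthigh : Filter.Tendsto (fun k : ℕ => L + 1 / ((k : ℝ) + 1)) Filter.atTop (nhds L) := by
      have h := (tendsto_const_nhds : Filter.Tendsto (fun _ : ℕ => L) Filter.atTop (nhds L))
      simpa using h.add hone
    have htend : Filter.Tendsto (fun k => x (φ k)) Filter.atTop (nhds L) :=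
      tendsto_of_tendsto_of_tendsto_of_le_of_le htlow hthigh
        (fun k => (hφ k).1.le) (fun k => (hφ k).2.le)
    have hφgrow : Filter.Tendsto (fun k => φ k + 1) Filter.atTop Filter.atTop :=
      Filter.tendsto_atTop_mono (fun k => Nat.le_succ_of_le (hφmono.le_apply))
        Filter.tendsto_id
    have hγ' : Filter.Tendsto (fun k => γ (φ k + 1)) Filter.atTop (nhds 0) :=
      hγ.comp hφgrow
    have hcontL : ContinuousAt f L :=
      hf_cont.continuousAt (Ici_mem_nhds hL0)
    have hfx : Filter.Tendsto (fun k => f (x (φ k))) Filter.atTop (nhds (f L)) :=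
      hcontL.tendsto.comp htend
    have hy : Filter.Tendsto (fun k => x (φ k + 1)) Filter.atTop (nhds (f L)) := by
      have h1 : Filter.Tendsto (fun k => max (f (x (φ k)) + γ (φ k + 1)) 0)
          Filter.atTop (nhds (max (f L + 0) 0)) :=
        (hfx.add hγ').max tendsto_const_nhds
      rw [add_zero, max_eq_left (hf_pos L hL0).le] at h1
      have heq : (fun k => x (φ k + 1)) = fun k => max (f (x (φ k)) + γ (φ k + 1)) 0 := by
        funext k; exact hrec (φ k)
      rw [heq]
      exact h1
    have hfL_le : f L ≤ L := by
      by_contra hc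
      push_neg at hc
      set c : ℝ := (f L - L) / 2 with hcdef
      have hcpos : 0 < c := by rw [hcdef]; linarith
      have hev : ∀ᶠ n in Filter.atTop, x n < L + c :=
        Filter.eventually_lt_of_limsup_lt (by linarith) hBu
      have hev' : ∀ᶠ k in Filter.atTop, x (φ k + 1) < L + c := hφgrow.eventually hev
      have := le_of_tendsto hy (hev'.mono fun k hk => hk.le)
      rw [hcdef] at this
      linarith
    have hLK : L < K := lt_of_le_of_lt hLε hεK
    have := hbelow L hL0 hLK
    linarith
end

section
/- Let f satisfy (A1)-(A2), the contraction/same-side condition with constant λ ∈ (0,1), and liminf_{x→∞}(x − f(x)) > 0; let (γ_n) be a real sequence with lim_{n→∞} γ_n = 0. Then every solution (x_n) of x_{n+1} = max{f(x_n) + γ_{n+1}, 0} with x_0 > 0 converges: either lim_{n→∞} x_n = K or lim_{n→∞} x_n = 0. -/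
lemma descent_aux (a : ℕ → ℝ) (N : ℕ) (ε d : ℝ) (hd : 0 < d)
    (h0 : ∀ n, N ≤ n → 0 ≤ a n)
    (H : ∀ n, N ≤ n → ε ≤ a n → a (n + 1) ≤ a n - d) :
    ∃ n, N ≤ n ∧ a n < ε := by
  by_contra hc
  push_neg at hc
  have key : ∀ k : ℕ, a (N + k) ≤ a N - k * d := by
    intro k
    induction k with
    | zero => simp
    | succ k ih =>
      have h1 := H (N + k) (Nat.le_add_right _ _) (hc _ (Nat.le_add_right _ _))
      have h2 : N + (k + 1) = (N + k) + 1 := rfl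
      rw [h2]
      push_cast
      push_cast at ih
      linarith
  obtain ⟨k, hk⟩ := exists_nat_gt (a N / d)
  have h2 := h0 (N + k) (Nat.le_add_right _ _)
  have h3 : a N < k * d := by
    rw [div_lt_iff₀ hd] at hk; linarith
  have := key k
  linarith

lemma strict_aux (f : ℝ → ℝ) (K lam : ℝ)
    (hbelow : ∀ x, 0 < x → x < K → x < f x) (habove : ∀ x, K < x → f x < x)
    (hlam : lam < 1)
    (hcontr : ∀ x, 0 < x → |f x - K| ≤ lam * |x - K| ∨ 0 < (f x - K) * (x - K)) :
    ∀ x, 0 < x → x ≠ K → |f x - K| < |x - K| := by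
  intro x hx hne
  rcases hcontr x hx with hc | hc
  · have h1 : 0 < |x - K| := abs_pos.mpr (sub_ne_zero.mpr hne)
    have h2 := abs_nonneg (f x - K)
    nlinarith
  · rcases lt_trichotomy x K with h1 | h1 | h1
    · have hfx : f x - K < 0 := by
        by_contra h'
        push_neg at h'
        nlinarith
      have hfx2 := hbelow x hx h1
      rw [abs_of_neg hfx, abs_of_neg (by linarith : x - K < 0)]
      linarith
    · exact absurd h1 hne
    · have hfx : 0 < f x - K := by
        by_contra h'
        push_neg at h'
        nlinarith
      have := habove x h1
      rw [abs_of_pos hfx, abs_of_pos (by linarith : 0 < x - K)]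
      linarith

lemma nonexp_aux (f : ℝ → ℝ) (K lam : ℝ) (hf0 : f 0 = 0)
    (hbelow : ∀ x, 0 < x → x < K → x < f x) (habove : ∀ x, K < x → f x < x)
    (hlam : lam < 1)
    (hcontr : ∀ x, 0 < x → |f x - K| ≤ lam * |x - K| ∨ 0 < (f x - K) * (x - K)) :
    ∀ x, 0 ≤ x → |f x - K| ≤ |x - K| := by
  intro x hx
  rcases eq_or_lt_of_le hx with h | h
  · rw [← h, hf0]
  · rcases eq_or_ne x K with he | hne
    · rcases hcontr x h with hc | hc
      · have := abs_nonneg (x - K)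
        nlinarith
      · rw [he] at hc; simp at hc
    · exact le_of_lt (strict_aux f K lam hbelow habove hlam hcontr x h hne)

lemma dec_aux (f : ℝ → ℝ) (K : ℝ) (hf_cont : ContinuousOn f (Set.Ici 0))
    (hstrict : ∀ y, 0 < y → y ≠ K → |f y - K| < |y - K|)
    (ε B : ℝ) (hε : 0 < ε) :
    ∃ δ, 0 < δ ∧ ∀ y, ε ≤ y → y ≤ B → ε ≤ |y - K| → |f y - K| ≤ |y - K| - δ := by
  set S := Set.Icc ε B ∩ {y | ε ≤ |y - K|} with hSdef
  have hSc : IsCompact S :=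
    isCompact_Icc.inter_right (isClosed_le continuous_const ((continuous_id.sub continuous_const).abs))
  rcases S.eq_empty_or_nonempty with hS | hS
  · refine ⟨1, one_pos, fun y h1 h2 h3 => ?_⟩
    exact absurd (show y ∈ S from ⟨⟨h1, h2⟩, h3⟩) (by simp [hS])
  · have hg : ContinuousOn (fun y => |y - K| - |f y - K|) S := by
      apply ContinuousOn.sub
      · exact ((continuous_id.sub continuous_const).abs).continuousOn
      · exact ((hf_cont.mono (fun y hy => le_trans (le_of_lt hε) hy.1.1)).sub continuousOn_const).abs
    obtain ⟨y0, hy0S, hy0⟩ := hSc.exists_isMinOn hS hg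
    refine ⟨|y0 - K| - |f y0 - K|, ?_, ?_⟩
    · have hne : y0 ≠ K := by
        intro h
        have := hy0S.2
        rw [h] at this
        simp at this
        linarith
      have := hstrict y0 (lt_of_lt_of_le hε hy0S.1.1) hne
      linarith
    · intro y h1 h2 h3
      have := isMinOn_iff.mp hy0 y ⟨⟨h1, h2⟩, h3⟩
      linarith

/-- Theorem `thm:detmain`: any solution converges either to `K` or to zero. -/
theorem stmt_4 (f : ℝ → ℝ) (K lam : ℝ)
    (hf_cont : ContinuousOn f (Set.Ici 0))
    (hf_maps : ∀ x : ℝ, 0 ≤ x → 0 ≤ f x)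
    (hf0 : f 0 = 0)
    (hf_pos : ∀ x : ℝ, 0 < x → 0 < f x)
    (hK : 0 < K) (hfK : f K = K)
    (hbelow : ∀ x : ℝ, 0 < x → x < K → x < f x)
    (habove : ∀ x : ℝ, K < x → f x < x)
    (hlam : lam ∈ Set.Ioo (0 : ℝ) 1)
    (hcontr : ∀ x : ℝ, 0 < x →
      |f x - K| ≤ lam * |x - K| ∨ 0 < (f x - K) * (x - K))
    (hliminf : 0 < Filter.liminf (fun y : ℝ => y - f y) Filter.atTop)
    (γ : ℕ → ℝ) (hγ : Filter.Tendsto γ Filter.atTop (nhds 0))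
    (x : ℕ → ℝ) (hx0 : 0 < x 0)
    (hrec : ∀ n : ℕ, x (n + 1) = max (f (x n) + γ (n + 1)) 0)
     :
    Filter.Tendsto x Filter.atTop (nhds K) ∨
      Filter.Tendsto x Filter.atTop (nhds 0) := by
  obtain ⟨hlam0, hlam1⟩ := hlam
  have hstrict := strict_aux f K lam hbelow habove hlam1 hcontr
  have hnonexp := nonexp_aux f K lam hf0 hbelow habove hlam1 hcontr
  have hxnn : ∀ n, 0 ≤ x n := by
    intro n
    cases n with
    | zero => exact le_of_lt hx0
    | succ n => rw [hrec n]; exact le_max_right _ _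
  -- projection + triangle step
  have hstep' : ∀ n, |x (n + 1) - K| ≤ |f (x n) - K| + |γ (n + 1)| := by
    intro n
    rw [hrec n]
    have h1 : |max (f (x n) + γ (n + 1)) 0 - K| ≤ |f (x n) + γ (n + 1) - K| := by
      rcases le_or_gt 0 (f (x n) + γ (n + 1)) with h | h
      · rw [max_eq_left h]
      · rw [max_eq_right (le_of_lt h),
          abs_of_nonpos (by linarith : (0 : ℝ) - K ≤ 0),
          abs_of_nonpos (by linarith : f (x n) + γ (n + 1) - K ≤ 0)]
        linarith
    have h2 : f (x n) + γ (n + 1) - K = (f (x n) - K) + γ (n + 1) := by ring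
    calc |max (f (x n) + γ (n + 1)) 0 - K| ≤ |f (x n) + γ (n + 1) - K| := h1
      _ = |(f (x n) - K) + γ (n + 1)| := by rw [h2]
      _ ≤ |f (x n) - K| + |γ (n + 1)| := abs_add_le _ _
  have hstep : ∀ n, |x (n + 1) - K| ≤ |x n - K| + |γ (n + 1)| := by
    intro n
    have := hnonexp (x n) (hxnn n)
    linarith [hstep' n]
  -- γ eventual bounds
  have hγb : ∀ e : ℝ, 0 < e → ∃ N, ∀ m, N ≤ m → |γ m| ≤ e := by
    intro e he
    obtain ⟨N, hN⟩ := Metric.tendsto_atTop.mp hγ e he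
    refine ⟨N, fun m hm => ?_⟩
    have := hN m hm
    rw [Real.dist_eq, sub_zero] at this
    exact le_of_lt this
  -- liminf extraction
  obtain ⟨c, hc, M, hMc⟩ : ∃ c, 0 < c ∧ ∃ M, ∀ y, M ≤ y → f y ≤ y - c := by
    have hdef : Filter.liminf (fun y : ℝ => y - f y) Filter.atTop
        = sSup {a : ℝ | ∀ᶠ y in Filter.atTop, a ≤ y - f y} := Filter.liminf_eq
    set s := {a : ℝ | ∀ᶠ y in Filter.atTop, a ≤ y - f y} with hs
    have hne : s.Nonempty := by
      by_contra h
      rw [Set.not_nonempty_iff_eq_empty] at h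
      rw [hdef, h, Real.sSup_empty] at hliminf
      exact lt_irrefl 0 hliminf
    obtain ⟨a, ha, ha0⟩ := exists_lt_of_lt_csSup hne (by rw [hdef] at hliminf; exact hliminf)
    obtain ⟨M, hM⟩ := Filter.eventually_atTop.mp ha
    exact ⟨a, ha0, M, fun y hy => by have := hM y hy; linarith⟩
  -- upper bound on f on [0, max M 0]
  obtain ⟨C, hC0, hCb⟩ : ∃ C, 0 ≤ C ∧ ∀ w, 0 ≤ w → w ≤ max M 0 → f w ≤ C := by
    have hne : (Set.Icc (0:ℝ) (max M 0)).Nonempty := ⟨0, le_refl 0, le_max_right M 0⟩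
    obtain ⟨z, hz, hzmax⟩ := isCompact_Icc.exists_isMaxOn hne
      (hf_cont.mono (fun w hw => hw.1))
    exact ⟨f z, hf_maps z hz.1, fun w h1 h2 => isMaxOn_iff.mp hzmax w ⟨h1, h2⟩⟩
  obtain ⟨Nc, hNc⟩ := hγb (c / 2) (by linarith)
  set B := max (x Nc) (C + c / 2) with hBdef
  have hxB : ∀ n, Nc ≤ n → x n ≤ B := by
    intro n hn
    induction n, hn using Nat.le_induction with
    | base => exact le_max_left _ _
    | succ n hn ih =>
      rw [hrec n]
      have hB0 : (0 : ℝ) ≤ B := le_trans (hxnn Nc) (le_max_left _ _)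
      refine max_le ?_ hB0
      have hγn := hNc (n + 1) (by omega)
      have hγn' : γ (n + 1) ≤ c / 2 := le_trans (le_abs_self _) hγn
      rcases le_or_gt (x n) (max M 0) with h | h
      · have h1 := hCb (x n) (hxnn n) h
        have h2 : C + c / 2 ≤ B := le_max_right _ _
        linarith
      · have h1 := hMc (x n) (le_trans (le_max_left M 0) (le_of_lt h))
        linarith
  -- convergence to K given eventual positive lower bound
  have hconvK : ∀ ε' N', 0 < ε' → (∀ n, N' ≤ n → ε' ≤ x n) →
      Filter.Tendsto x Filter.atTop (nhds K) := by
    intro ε' N' hε' hlow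
    rw [Metric.tendsto_atTop]
    intro η hη
    set ε := min ε' (η / 3) with hεdef
    have hε : 0 < ε := lt_min hε' (by linarith)
    obtain ⟨δ, hδ, hdec⟩ := dec_aux f K hf_cont hstrict ε B hε
    set d := min δ ε with hddef
    have hd : 0 < d := lt_min hδ hε
    obtain ⟨Ng, hNg⟩ := hγb (d / 2) (by linarith)
    set N := max (max N' Nc) Ng with hNdef
    have hI : ∀ n, N ≤ n → ε ≤ |x n - K| → |x (n + 1) - K| ≤ |x n - K| - d / 2 := by
      intro n hn ha
      have hn1 : N' ≤ n := le_trans (le_trans (le_max_left _ _) (le_max_left _ _)) hn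
      have hn2 : Nc ≤ n := le_trans (le_trans (le_max_right _ _) (le_max_left _ _)) hn
      have hn3 : Ng ≤ n + 1 := by
        have : Ng ≤ N := le_max_right _ _
        omega
      have h1 := hdec (x n) (le_trans (min_le_left _ _) (hlow n hn1)) (hxB n hn2) ha
      have h2 := hNg (n + 1) hn3
      have h3 : d ≤ δ := min_le_left _ _
      linarith [hstep' n]
    obtain ⟨n0, hn0N, hn0⟩ := descent_aux (fun n => |x n - K|) N ε (d / 2)
      (by linarith) (fun n _ => abs_nonneg _) hI
    have hinv : ∀ m, n0 ≤ m → |x m - K| < ε + d / 2 := by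
      intro m hm
      induction m, hm using Nat.le_induction with
      | base => linarith
      | succ m hm ih =>
        rcases lt_or_ge (|x m - K|) ε with h | h
        · have h1 := hstep m
          have h2 := hNg (m + 1) (by omega)
          linarith
        · have := hI m (le_trans hn0N hm) h
          linarith
    refine ⟨n0, fun m hm => ?_⟩
    rw [Real.dist_eq]
    have h1 := hinv m hm
    have h2 : ε ≤ η / 3 := min_le_right _ _
    have h3 : d ≤ ε := min_le_right _ _
    linarith
  -- main dichotomy
  by_cases h0 : Filter.Tendsto x Filter.atTop (nhds 0)
  · exact Or.inr h0
  left
  rw [Metric.tendsto_atTop] at h0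
  push_neg at h0
  obtain ⟨ε0, hε0, hfreq⟩ := h0
  have hfreq' : ∀ N, ∃ n, N ≤ n ∧ ε0 ≤ x n := by
    intro N
    obtain ⟨n, hn, h⟩ := hfreq N
    rw [Real.dist_eq, sub_zero, abs_of_nonneg (hxnn n)] at h
    exact ⟨n, hn, h⟩
  have hkey : ∃ ε' N', 0 < ε' ∧ ∀ n, N' ≤ n → ε' ≤ x n := by
    by_contra h2
    push_neg at h2
    -- h2 : ∀ ε' N', 0 < ε' → ∃ n, N' ≤ n ∧ x n < ε'
    have h2' : ∀ e : ℝ, ∀ N0 : ℕ, 0 < e → ∃ n, N0 ≤ n ∧ x n < e := by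
      intro e N0 he
      obtain ⟨n, hn1, hn2⟩ := h2 e N0 he
      exact ⟨n, hn1, hn2⟩
    -- continuity at 0 bound
    obtain ⟨r, hrpos, hrK⟩ : ∃ r, 0 < r ∧ ∀ y, 0 ≤ y → y ≤ r → f y < K / 2 := by
      have hc0 : ContinuousWithinAt f (Set.Ici 0) 0 := hf_cont 0 Set.self_mem_Ici
      rw [Metric.continuousWithinAt_iff] at hc0
      obtain ⟨dd, hdd, hball⟩ := hc0 (K / 2) (by linarith)
      refine ⟨dd / 2, by linarith, fun y h1 h2 => ?_⟩
      have hy : y ∈ Set.Ici (0:ℝ) := h1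
      have := hball hy (by rw [Real.dist_eq, sub_zero, abs_of_nonneg h1]; linarith)
      rw [hf0, Real.dist_eq, sub_zero] at this
      exact lt_of_le_of_lt (le_abs_self _) this
    set ε := min (min ε0 r) (K / 4) with hεdef
    have hε : 0 < ε := lt_min (lt_min hε0 hrpos) (by linarith)
    have hεK : ε ≤ K / 4 := min_le_right _ _
    have hεr : ε ≤ r := le_trans (min_le_left _ _) (min_le_right _ _)
    have hεε0 : ε ≤ ε0 := le_trans (min_le_left _ _) (min_le_left _ _)
    obtain ⟨δ, hδ, hdec⟩ := dec_aux f K hf_cont hstrict ε B hε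
    set d := min δ ε with hddef
    have hd : 0 < d := lt_min hδ hε
    have hdε : d ≤ ε := min_le_right _ _
    obtain ⟨Ng, hNg⟩ := hγb (d / 2) (by linarith)
    set N := max Nc Ng with hNdef
    have hxlow : ∀ n, |x n - K| ≤ K - ε → ε ≤ x n := by
      intro n h
      have : K - x n ≤ |x n - K| := by
        rw [abs_sub_comm]
        exact le_abs_self _
      linarith
    have hI : ∀ n, N ≤ n → ε ≤ x n → ε ≤ |x n - K| →
        |x (n + 1) - K| ≤ |x n - K| - d / 2 := by
      intro n hn hx hax
      have hn2 : Nc ≤ n := le_trans (le_max_left _ _) hn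
      have hn3 : Ng ≤ n + 1 := by
        have : Ng ≤ N := le_max_right _ _
        omega
      have h1 := hdec (x n) hx (hxB n hn2) hax
      have h2 := hNg (n + 1) hn3
      have h3 : d ≤ δ := min_le_left _ _
      linarith [hstep' n]
    have hinv : ∀ n, N ≤ n → |x n - K| ≤ K - ε → |x (n + 1) - K| ≤ K - ε := by
      intro n hn h
      rcases lt_or_ge (|x n - K|) ε with h1 | h1
      · have h2 := hstep n
        have h3 := hNg (n + 1) (by have : Ng ≤ N := le_max_right _ _; omega)
        linarith
      · have := hI n hn (hxlow n h) h1
        linarith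
    -- entry point: crossing from below ε to above ε
    obtain ⟨m, hmN, hm⟩ := h2' ε N hε
    obtain ⟨m', hm'1, hm'0⟩ := hfreq' (m + 1)
    obtain ⟨n, hmn, hxn, hxn1⟩ : ∃ n, m ≤ n ∧ x n < ε ∧ ε ≤ x (n + 1) := by
      by_contra hcr
      push_neg at hcr
      have hall : ∀ i, m ≤ i → i ≤ m' → x i < ε := by
        intro i hi
        induction i, hi using Nat.le_induction with
        | base => intro _; exact hm
        | succ i hi ih =>
          intro hile
          have h2i := ih (by omega)
          exact hcr i hi h2i
      have := hall m' (by omega) (le_refl m')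
      linarith
    have hnN : N ≤ n := le_trans hmN hmn
    have hfb : f (x n) < K / 2 := hrK (x n) (hxnn n) (le_trans (le_of_lt hxn) hεr)
    have hx1b : x (n + 1) ≤ K / 2 + d / 2 := by
      rw [hrec n]
      refine max_le ?_ (by linarith)
      have h1 := hNg (n + 1) (by have : Ng ≤ N := le_max_right _ _; omega)
      have h2 : γ (n + 1) ≤ d / 2 := le_trans (le_abs_self _) h1
      linarith
    have ha1 : |x (n + 1) - K| ≤ K - ε := by
      have hx1K : x (n + 1) ≤ K := by linarith
      rw [abs_of_nonpos (by linarith : x (n + 1) - K ≤ 0)]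
      linarith
    have hforever : ∀ j, n + 1 ≤ j → |x j - K| ≤ K - ε := by
      intro j hj
      induction j, hj using Nat.le_induction with
      | base => exact ha1
      | succ j hj ih => exact hinv j (by omega) ih
    obtain ⟨p, hp, hpε⟩ := h2' ε (n + 1) hε
    have := hxlow p (hforever p hp)
    linarith
  obtain ⟨ε', N', hε', hlow⟩ := hkey
  exact hconvK ε' N' hε' hlow
end

section
/- Let f : [0,∞) → [0,∞) be continuous with f(0) = 0, f(K) = K for some K > 0, and f(x) > x for all x ∈ (0,K). Let γ_n = (−1)^n β_n with β_n > 0 for all n ∈ ℕ and lim_{n→∞} γ_n = 0. Assume there exists δ̄ > 0 such that f(x+a) − f(x) > a for all x, a ∈ (0, δ̄), and that f(β_{2k}) > β_{2k+1} for all sufficiently large k ∈ ℕ. Then no solution (x_n) of x_{n+1} = max{f(x_n) + γ_{n+1}, 0} with x_0 > 0 satisfies lim_{n→∞} x_n = 0. -/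
/-- Proposition `prop:pmgammanew`: with alternating perturbations `γ_n = (-1)^n β_n`,
the superadditivity condition near zero and `f(β_{2k}) > β_{2k+1}` for large `k`,
no solution of `x_{n+1} = max{f(x_n) + γ_{n+1}, 0}` with `x_0 > 0` tends to zero. -/
theorem stmt_5 (f : ℝ → ℝ) (K : ℝ)
    (hf_cont : ContinuousOn f (Set.Ici 0))
    (hf_maps : ∀ x : ℝ, 0 ≤ x → 0 ≤ f x)
    (hf0 : f 0 = 0)
    (hK : 0 < K) (hfK : f K = K)
    (hbelow : ∀ x : ℝ, 0 < x → x < K → x < f x)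
    (β : ℕ → ℝ) (hβpos : ∀ n : ℕ, 0 < β n)
    (γ : ℕ → ℝ) (hγβ : ∀ n : ℕ, γ n = (-1 : ℝ) ^ n * β n)
    (hγ : Filter.Tendsto γ Filter.atTop (nhds 0))
    (δbar : ℝ) (hδbar : 0 < δbar)
    (hder : ∀ y a : ℝ, y ∈ Set.Ioo 0 δbar → a ∈ Set.Ioo 0 δbar →
      a < f (y + a) - f y)
    (hfβ : ∃ k₀ : ℕ, ∀ k ≥ k₀, β (2 * k + 1) < f (β (2 * k)))
    (x : ℕ → ℝ) (hx0 : 0 < x 0)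
    (hrec : ∀ n : ℕ, x (n + 1) = max (f (x n) + γ (n + 1)) 0) :
    ¬ Filter.Tendsto x Filter.atTop (nhds 0) := by
  intro hlim
  have hxnn : ∀ n, 0 ≤ x n := by
    intro n
    cases n with
    | zero => exact hx0.le
    | succ m => rw [hrec m]; exact le_max_right _ _
  have hβeq : ∀ n, |γ n| = β n := by
    intro n
    rw [hγβ n, abs_mul, abs_pow, abs_neg, abs_one, one_pow, one_mul,
      abs_of_pos (hβpos n)]
  have hβ0 : Filter.Tendsto β Filter.atTop (nhds 0) := by
    have h := hγ.abs
    rw [abs_zero] at h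
    exact h.congr fun n => hβeq n
  have hxin : Filter.Tendsto x Filter.atTop (nhdsWithin 0 (Set.Ici 0)) :=
    tendsto_nhdsWithin_of_tendsto_nhds_of_eventually_within _ hlim
      (Filter.Eventually.of_forall fun n => hxnn n)
  have hfx : Filter.Tendsto (fun n => f (x n)) Filter.atTop (nhds 0) := by
    have hcw : Filter.Tendsto f (nhdsWithin 0 (Set.Ici 0)) (nhds (f 0)) :=
      hf_cont 0 Set.self_mem_Ici
    have h := hcw.comp hxin
    rwa [hf0] at h
  obtain ⟨N1, hN1⟩ := Filter.eventually_atTop.mp (hlim.eventually_lt_const hK)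
  obtain ⟨N2, hN2⟩ := Filter.eventually_atTop.mp (hβ0.eventually_lt_const hδbar)
  obtain ⟨N3, hN3⟩ := Filter.eventually_atTop.mp (hfx.eventually_lt_const hδbar)
  obtain ⟨k₀, hk₀⟩ := hfβ
  set k₁ := max (max N1 (max N2 N3)) k₀ with hk₁
  have key : ∀ k, k₁ ≤ k →
      0 < x (2*k+3) ∧ (0 < x (2*k+1) → x (2*k+1) < x (2*k+3)) := by
    intro k hk
    have hkN1 : N1 ≤ k := le_trans (le_trans (le_max_left _ _) (le_max_left _ _)) hk
    have hkN2 : N2 ≤ k := le_trans (le_trans (le_max_left _ _) (le_max_right _ _))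
      (le_trans (le_max_left _ _) hk)
    have hkN3 : N3 ≤ k := le_trans (le_trans (le_max_right _ _) (le_max_right _ _))
      (le_trans (le_max_left _ _) hk)
    have hkk₀ : k₀ ≤ k := le_trans (le_max_right _ _) hk
    set c := f (x (2*k+1)) with hc
    have hc0 : 0 ≤ c := hf_maps _ (hxnn _)
    have hβ2 : 0 < β (2*k+2) := hβpos _
    have hβ2δ : β (2*k+2) < δbar := hN2 (2*k+2) (by omega)
    have hγeven : γ (2*k+2) = β (2*k+2) := by
      rw [hγβ]
      have he : (-1:ℝ)^(2*k+2) = 1 := Even.neg_one_pow ⟨k+1, by ring⟩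
      rw [he, one_mul]
    have hγodd : γ (2*k+3) = -β (2*k+3) := by
      rw [hγβ]
      have ho : (-1:ℝ)^(2*k+3) = -1 := Odd.neg_one_pow ⟨k+1, by ring⟩
      rw [ho, neg_one_mul]
    have hx2 : x (2*k+2) = β (2*k+2) + c := by
      have h := hrec (2*k+1)
      rw [show (2*k+1+1 : ℕ) = 2*k+2 from rfl] at h
      rw [h, hγeven, max_eq_left (by linarith)]
      ring
    have hx3 : x (2*k+3) = max (f (x (2*k+2)) + γ (2*k+3)) 0 := hrec (2*k+2)
    have hx3ge : f (x (2*k+2)) - β (2*k+3) ≤ x (2*k+3) := by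
      rw [hx3, hγodd]
      have := le_max_left (f (x (2*k+2)) + -β (2*k+3)) (0:ℝ)
      linarith
    have hfββ : β (2*k+3) < f (β (2*k+2)) := by
      have h := hk₀ (k+1) (by omega)
      have e1 : 2*(k+1)+1 = 2*k+3 := by ring
      have e2 : 2*(k+1) = 2*k+2 := by ring
      rwa [e1, e2] at h
    rcases eq_or_lt_of_le hc0 with hczero | hcpos
    · have hx2' : x (2*k+2) = β (2*k+2) := by rw [hx2, ← hczero, add_zero]
      have hpos : 0 < x (2*k+3) := by
        rw [hx2'] at hx3ge
        linarith
      refine ⟨hpos, fun hxp => ?_⟩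
      have hxK : x (2*k+1) < K := hN1 (2*k+1) (by omega)
      have := hbelow _ hxp hxK
      rw [← hc, ← hczero] at this
      linarith
    · have hcδ : c < δbar := hN3 (2*k+1) (by omega)
      have hder' := hder (β (2*k+2)) c ⟨hβ2, hβ2δ⟩ ⟨hcpos, hcδ⟩
      rw [← hx2] at hder'
      have hbig : β (2*k+3) + c < f (x (2*k+2)) := by linarith
      have hpos : c < x (2*k+3) := by linarith
      refine ⟨lt_trans hcpos hpos, fun hxp => ?_⟩
      have hxK : x (2*k+1) < K := hN1 (2*k+1) (by omega)
      have := hbelow _ hxp hxK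
      rw [← hc] at this
      linarith
  have pos_incr : ∀ j : ℕ,
      x (2*(k₁+1)+1) ≤ x (2*(k₁+1+j)+1) ∧ 0 < x (2*(k₁+1+j)+1) := by
    intro j
    induction j with
    | zero =>
      have h := (key k₁ le_rfl).1
      have e : 2*(k₁+1+0)+1 = 2*k₁+3 := by ring
      rw [e]
      exact ⟨le_rfl, h⟩
    | succ j ih =>
      have h := key (k₁+1+j) (by omega)
      have h2 := h.2 ih.2
      have e : 2*(k₁+1+(j+1))+1 = 2*(k₁+1+j)+3 := by ring
      rw [e]
      exact ⟨le_trans ih.1 h2.le, h.1⟩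
  obtain ⟨M, hM⟩ := Filter.eventually_atTop.mp
    (hlim.eventually_lt_const (lt_of_lt_of_le (pos_incr 0).2 (by
      have e : 2*(k₁+1+0)+1 = 2*(k₁+1)+1 := by ring
      rw [e])))
  have h1 := (pos_incr M).1
  have h2 := hM (2*(k₁+1+M)+1) (by omega)
  linarith
end

section
/- Let f : [0,∞) → [0,∞) be continuous with f(0) = 0, f(K) = K for some K > 0, and f(x) > x for all x ∈ (0,K). Let γ_n = (−1)^n β_n where (β_n) is a strictly decreasing sequence of positive reals with lim_{n→∞} β_n = 0. Then no solution (x_n) of x_{n+1} = max{f(x_n) + γ_{n+1}, 0} with x_0 > 0 satisfies lim_{n→∞} x_n = 0. -/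
/-- Corollary `cor:altsign`: with alternating perturbations `γ_n = (-1)^n β_n`,
where `(β_n)` is a strictly decreasing positive sequence tending to zero,
no solution of `x_{n+1} = max{f(x_n) + γ_{n+1}, 0}` with `x_0 > 0` tends to zero. -/
theorem stmt_6 (f : ℝ → ℝ) (K : ℝ)
    (hf_cont : ContinuousOn f (Set.Ici 0))
    (hf_maps : ∀ x : ℝ, 0 ≤ x → 0 ≤ f x)
    (hf0 : f 0 = 0)
    (hK : 0 < K) (hfK : f K = K)
    (hbelow : ∀ x : ℝ, 0 < x → x < K → x < f x)
    (β : ℕ → ℝ) (hβpos : ∀ n : ℕ, 0 < β n)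
    (hβdec : StrictAnti β)
    (hβlim : Filter.Tendsto β Filter.atTop (nhds 0))
    (γ : ℕ → ℝ) (hγβ : ∀ n : ℕ, γ n = (-1 : ℝ) ^ n * β n)
    (x : ℕ → ℝ) (hx0 : 0 < x 0)
    (hrec : ∀ n : ℕ, x (n + 1) = max (f (x n) + γ (n + 1)) 0) :
    ¬ Filter.Tendsto x Filter.atTop (nhds 0) := by
  intro hlim
  have hxnn : ∀ n : ℕ, 0 ≤ x n := by
    intro n
    cases n with
    | zero => exact hx0.le
    | succ m => rw [hrec]; exact le_max_right _ _
  have hγeven : ∀ n : ℕ, γ (2 * n) = β (2 * n) := by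
    intro n
    rw [hγβ, (even_two_mul n).neg_one_pow, one_mul]
  have hγodd : ∀ n : ℕ, γ (2 * n + 1) = -β (2 * n + 1) := by
    intro n
    rw [hγβ, (odd_two_mul_add_one n).neg_one_pow, neg_one_mul]
  -- eventually x m < K
  have hev : ∀ᶠ m in Filter.atTop, x m < K := by
    have : Set.Iio K ∈ nhds (0 : ℝ) := Iio_mem_nhds hK
    exact hlim.eventually this
  obtain ⟨N, hN⟩ := Filter.eventually_atTop.mp hev
  set W := β (2 * (N + 1)) - β (2 * (N + 1) + 1) with hWdef
  have hWpos : 0 < W := sub_pos.mpr (hβdec (by omega))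
  have key : ∀ n, N + 1 ≤ n → W ≤ x (2 * n) - β (2 * n + 1) := by
    intro n hn
    induction n, hn using Nat.le_induction with
    | base =>
      have hb : x (2 * N + 1 + 1) = max (f (x (2 * N + 1)) + γ (2 * N + 1 + 1)) 0 :=
        hrec (2 * N + 1)
      have he : 2 * N + 1 + 1 = 2 * (N + 1) := by ring
      rw [he] at hb
      have hγ : γ (2 * (N + 1)) = β (2 * (N + 1)) := hγeven (N + 1)
      have hfnn : 0 ≤ f (x (2 * N + 1)) := hf_maps _ (hxnn _)
      have hxge : β (2 * (N + 1)) ≤ x (2 * (N + 1)) := by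
        rw [hb, hγ]
        exact le_trans (by linarith) (le_max_left _ _)
      linarith [hWpos]
    | succ n hn ih =>
      have hβ1 := hβpos (2 * n + 1)
      have hx2n_pos : 0 < x (2 * n) := by linarith
      have hx2n_lt : x (2 * n) < K := hN (2 * n) (by omega)
      have hf1 : x (2 * n) < f (x (2 * n)) := hbelow _ hx2n_pos hx2n_lt
      -- odd step
      have h1 : x (2 * n + 1) = f (x (2 * n)) - β (2 * n + 1) := by
        have := hrec (2 * n)
        rw [hγodd n] at this
        rw [this]
        rw [show f (x (2 * n)) + -β (2 * n + 1) = f (x (2 * n)) - β (2 * n + 1) by ring]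
        exact max_eq_left (by linarith)
      have hx1pos : 0 < x (2 * n + 1) := by rw [h1]; linarith
      have hx1lt : x (2 * n + 1) < K := hN (2 * n + 1) (by omega)
      have hf2 : x (2 * n + 1) < f (x (2 * n + 1)) := hbelow _ hx1pos hx1lt
      -- even step
      have h2 : f (x (2 * n + 1)) + β (2 * n + 2) ≤ x (2 * n + 2) := by
        have hr := hrec (2 * n + 1)
        have he : 2 * n + 1 + 1 = 2 * (n + 1) := by ring
        rw [he] at hr
        have hγ : γ (2 * (n + 1)) = β (2 * (n + 1)) := hγeven (n + 1)
        rw [hγ] at hr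
        have he2 : 2 * (n + 1) = 2 * n + 2 := by ring
        rw [he2] at hr
        rw [hr]
        exact le_max_left _ _
      have hβ2 : β (2 * n + 3) < β (2 * n + 2) := hβdec (by omega)
      have he3 : 2 * (n + 1) = 2 * n + 2 := by ring
      have he4 : 2 * (n + 1) + 1 = 2 * n + 3 := by ring
      rw [he4, he3]
      linarith
  -- contradiction: x (2n) - β (2n+1) tends to 0 but is ≥ W > 0
  have h2n : Filter.Tendsto (fun n : ℕ => 2 * n) Filter.atTop Filter.atTop :=
    Filter.tendsto_atTop_atTop.mpr fun b => ⟨b, fun a ha => by omega⟩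
  have h2n1 : Filter.Tendsto (fun n : ℕ => 2 * n + 1) Filter.atTop Filter.atTop :=
    Filter.tendsto_atTop_atTop.mpr fun b => ⟨b, fun a ha => by omega⟩
  have hxsub : Filter.Tendsto (fun n : ℕ => x (2 * n)) Filter.atTop (nhds 0) :=
    hlim.comp h2n
  have hβsub : Filter.Tendsto (fun n : ℕ => β (2 * n + 1)) Filter.atTop (nhds 0) :=
    hβlim.comp h2n1
  have hw : Filter.Tendsto (fun n : ℕ => x (2 * n) - β (2 * n + 1)) Filter.atTop
      (nhds 0) := by
    have := hxsub.sub hβsub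
    simpa using this
  have hle : W ≤ (0 : ℝ) :=
    ge_of_tendsto hw (Filter.eventually_atTop.mpr ⟨N + 1, fun n hn => key n hn⟩)
  linarith
end

section
/- Let f : [0,∞) → [0,∞) be continuous with f(0) = 0, f(K) = K for some K > 0, and f(x) > x for all x ∈ (0,K); let (γ_n) satisfy lim_{n→∞} γ_n = 0, with γ_1 > 0 and with infinitely many negative and infinitely many positive γ_n. Group the consecutive perturbations of equal sign: set n_0 = inf{i > 1 : γ_i < 0} − 1, n_1 = inf{i > n_0 : γ_i > 0} − 1, and for k ≥ 1, n_{2k} = inf{i > n_{2k−1} : γ_i < 0} − 1, n_{2k+1} = inf{i > n_{2k} : γ_i > 0} − 1; define β_{2k} = Σ_{i=n_{2k−1}+1}^{n_{2k}} γ_i > 0 and β_{2k+1} = −Σ_{i=n_{2k}+1}^{n_{2k+1}} γ_i > 0, and assume lim_{n→∞} β_n = 0. Assume there exists δ̄ > 0 such that f(x+a) − f(x) > a for all x, a ∈ (0, δ̄), and that f(β_{2k}) > β_{2k+1} for all sufficiently large k. Then no solution (x_n) of x_{n+1} = max{f(x_n) + γ_{n+1}, 0} with x_0 > 0 satisfies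 lim_{n→∞} x_n = 0. -/
/-- Proposition `prop:altgroup`: grouping consecutive perturbations of equal sign
into sums `β_{2k}` (positive groups) and `β_{2k+1}` (negative groups), if `β_n → 0`,
the superadditivity condition near zero holds and `f(β_{2k}) > β_{2k+1}` for large `k`,
then no solution of `x_{n+1} = max{f(x_n) + γ_{n+1}, 0}` with `x_0 > 0` tends to zero. -/
theorem stmt_7 (f : ℝ → ℝ) (K : ℝ)
    (hf_cont : ContinuousOn f (Set.Ici 0))
    (hf_maps : ∀ x : ℝ, 0 ≤ x → 0 ≤ f x)
    (hf0 : f 0 = 0)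
    (hK : 0 < K) (hfK : f K = K)
    (hbelow : ∀ x : ℝ, 0 < x → x < K → x < f x)
    (γ : ℕ → ℝ)
    (hγ : Filter.Tendsto γ Filter.atTop (nhds 0))
    (hγ1 : 0 < γ 1)
    (hinfneg : {i : ℕ | γ i < 0}.Infinite)
    (hinfpos : {i : ℕ | 0 < γ i}.Infinite)
    (ν : ℕ → ℕ) (β : ℕ → ℝ)
    (hν0 : ν 0 = sInf {i : ℕ | 1 < i ∧ γ i < 0} - 1)
    (hν1 : ν 1 = sInf {i : ℕ | ν 0 < i ∧ 0 < γ i} - 1)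
    (hνeven : ∀ k : ℕ, 1 ≤ k →
      ν (2 * k) = sInf {i : ℕ | ν (2 * k - 1) < i ∧ γ i < 0} - 1)
    (hνodd : ∀ k : ℕ, 1 ≤ k →
      ν (2 * k + 1) = sInf {i : ℕ | ν (2 * k) < i ∧ 0 < γ i} - 1)
    (hβeven : ∀ k : ℕ, 1 ≤ k →
      β (2 * k) = ∑ i ∈ Finset.Icc (ν (2 * k - 1) + 1) (ν (2 * k)), γ i)
    (hβodd : ∀ k : ℕ, 1 ≤ k →
      β (2 * k + 1) = -∑ i ∈ Finset.Icc (ν (2 * k) + 1) (ν (2 * k + 1)), γ i)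
    (hβpos : ∀ k : ℕ, 1 ≤ k → 0 < β (2 * k) ∧ 0 < β (2 * k + 1))
    (hβlim : Filter.Tendsto β Filter.atTop (nhds 0))
    (δbar : ℝ) (hδbar : 0 < δbar)
    (hder : ∀ y a : ℝ, y ∈ Set.Ioo 0 δbar → a ∈ Set.Ioo 0 δbar →
      a < f (y + a) - f y)
    (hfβ : ∃ k₀ : ℕ, ∀ k ≥ k₀, β (2 * k + 1) < f (β (2 * k)))
    (x : ℕ → ℝ) (hx0 : 0 < x 0)
    (hrec : ∀ n : ℕ, x (n + 1) = max (f (x n) + γ (n + 1)) 0) :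
    ¬ Filter.Tendsto x Filter.atTop (nhds 0) := by
  intro hxlim
  set δ : ℝ := min δbar K with hδdef
  have hδpos : 0 < δ := lt_min hδbar hK
  have hδle1 : δ ≤ δbar := min_le_left _ _
  have hδle2 : δ ≤ K := min_le_right _ _
  have hxnn : ∀ n, 0 ≤ x n := by
    intro n
    cases n with
    | zero => exact hx0.le
    | succ m => rw [hrec m]; exact le_max_right _ _
  have hfx : ∀ z : ℝ, 0 ≤ z → z < K → z ≤ f z := by
    intro z hz hzK
    rcases eq_or_lt_of_le hz with h | h
    · simp [← h, hf0]
    · exact (hbelow z h hzK).le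
  have hstep : ∀ n, x n < K → x n + γ (n + 1) ≤ x (n + 1) := by
    intro n hn
    have h1 : x n ≤ f (x n) := hfx _ (hxnn n) hn
    have h2 : f (x n) + γ (n + 1) ≤ x (n + 1) := by
      rw [hrec n]; exact le_max_left _ _
    linarith
  obtain ⟨N, hN⟩ : ∃ N, ∀ n ≥ N, x n < δ :=
    Filter.eventually_atTop.1 (hxlim.eventually_lt_const hδpos)
  obtain ⟨M, hM⟩ : ∃ M, ∀ n ≥ M, β n < δ :=
    Filter.eventually_atTop.1 (hβlim.eventually_lt_const hδpos)
  obtain ⟨k₁, hk₁⟩ := hfβ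
  have tel : ∀ m, N ≤ m → ∀ n, m ≤ n →
      x m + ∑ i ∈ Finset.Icc (m + 1) n, γ i ≤ x n := by
    intro m hm n hn
    induction n, hn using Nat.le_induction with
    | base => rw [Finset.Icc_eq_empty (by omega), Finset.sum_empty]; linarith
    | succ n hmn ih =>
      have h1 : x n + γ (n + 1) ≤ x (n + 1) :=
        hstep n (lt_of_lt_of_le (hN n (by omega)) hδle2)
      rw [Finset.sum_Icc_succ_top (by omega)]
      linarith
  have lem_neg : ∀ k, 1 ≤ k → ν (2 * k - 1) < ν (2 * k) + 1 ∧ γ (ν (2 * k) + 1) < 0 := by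
    intro k hk
    obtain ⟨b, hb, hgt⟩ := hinfneg.exists_gt (ν (2 * k - 1))
    have hSne : {i : ℕ | ν (2 * k - 1) < i ∧ γ i < 0}.Nonempty := ⟨b, hgt, hb⟩
    obtain ⟨h1, h2⟩ := Nat.sInf_mem hSne
    have hν := hνeven k hk
    have he : ν (2 * k) + 1 = sInf {i : ℕ | ν (2 * k - 1) < i ∧ γ i < 0} := by omega
    rw [he]
    exact ⟨h1, h2⟩
  have lem_pos : ∀ k, 1 ≤ k → ν (2 * k) < ν (2 * k + 1) + 1 ∧ 0 < γ (ν (2 * k + 1) + 1) := by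
    intro k hk
    obtain ⟨b, hb, hgt⟩ := hinfpos.exists_gt (ν (2 * k))
    have hSne : {i : ℕ | ν (2 * k) < i ∧ 0 < γ i}.Nonempty := ⟨b, hgt, hb⟩
    obtain ⟨h1, h2⟩ := Nat.sInf_mem hSne
    have hν := hνodd k hk
    have he : ν (2 * k + 1) + 1 = sInf {i : ℕ | ν (2 * k) < i ∧ 0 < γ i} := by omega
    rw [he]
    exact ⟨h1, h2⟩
  have pos_strict : ∀ k, 1 ≤ k → ν (2 * k) < ν (2 * k + 1) := by
    intro k hk
    obtain ⟨h1, h2⟩ := lem_pos k hk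
    obtain ⟨_, h3⟩ := lem_neg k hk
    by_contra h
    have he : ν (2 * k + 1) = ν (2 * k) := by omega
    rw [he] at h2
    linarith
  have neg_strict : ∀ k, 2 ≤ k → ν (2 * k - 1) < ν (2 * k) := by
    intro k hk
    obtain ⟨h1, h2⟩ := lem_neg k (by omega)
    obtain ⟨_, h3⟩ := lem_pos (k - 1) (by omega)
    have he : 2 * (k - 1) + 1 = 2 * k - 1 := by omega
    rw [he] at h3
    by_contra h
    have he2 : ν (2 * k) = ν (2 * k - 1) := by omega
    rw [he2] at h2
    linarith
  have growth : ∀ k, 2 ≤ k → ν (2 * k - 1) + 2 ≤ ν (2 * k + 1) := by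
    intro k hk
    have h1 := neg_strict k hk
    have h2 := pos_strict k (by omega)
    omega
  have bound : ∀ k, 2 ≤ k → k ≤ ν (2 * k + 1) + 2 := by
    intro k hk
    induction k, hk using Nat.le_induction with
    | base => omega
    | succ n hn ih =>
      have h := growth (n + 1) (by omega)
      have he : 2 * (n + 1) - 1 = 2 * n + 1 := by omega
      rw [he] at h
      omega
  have hνtend : Filter.Tendsto (fun k => ν (2 * k + 1)) Filter.atTop Filter.atTop := by
    rw [Filter.tendsto_atTop]
    intro b
    rw [Filter.eventually_atTop]
    exact ⟨b + 4, fun k hk => by have := bound k (by omega); omega⟩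
  obtain ⟨K₁, hK₁⟩ : ∃ K₁, ∀ j ≥ K₁, N ≤ ν (2 * j + 1) :=
    Filter.eventually_atTop.1 (hνtend.eventually_ge_atTop N)
  set k₀ := K₁ + k₁ + M + 2 with hk₀def
  have main : ∀ k, k₀ ≤ k → x (ν (2 * k - 1)) < x (ν (2 * k + 1)) := by
    intro k hk
    have hk2 : 2 ≤ k := by omega
    have hpN : N ≤ ν (2 * k - 1) := by
      have h := hK₁ (k - 1) (by omega)
      have he : 2 * (k - 1) + 1 = 2 * k - 1 := by omega
      rwa [he] at h
    have hpq : ν (2 * k - 1) ≤ ν (2 * k) := (neg_strict k hk2).le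
    have hqr : ν (2 * k) + 1 ≤ ν (2 * k + 1) := pos_strict k (by omega)
    have hqN : N ≤ ν (2 * k) := le_trans hpN hpq
    have hβp := hβpos k (by omega)
    have hβsmall : β (2 * k) < δ := hM (2 * k) (by omega)
    have hfb : β (2 * k + 1) < f (β (2 * k)) := hk₁ k (by omega)
    have hv : x (ν (2 * k - 1)) + β (2 * k) ≤ x (ν (2 * k)) := by
      rw [hβeven k (by omega)]
      exact tel _ hpN _ hpq
    have hq1 : f (x (ν (2 * k))) + γ (ν (2 * k) + 1) ≤ x (ν (2 * k) + 1) := by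
      rw [hrec]; exact le_max_left _ _
    have hw : x (ν (2 * k) + 1) + ∑ i ∈ Finset.Icc (ν (2 * k) + 2) (ν (2 * k + 1)), γ i
        ≤ x (ν (2 * k + 1)) := tel _ (by omega) _ hqr
    have hsum : ∑ i ∈ Finset.Icc (ν (2 * k) + 1) (ν (2 * k + 1)), γ i
        = γ (ν (2 * k) + 1) + ∑ i ∈ Finset.Icc (ν (2 * k) + 2) (ν (2 * k + 1)), γ i := by
      have hset : Finset.Icc (ν (2 * k) + 1) (ν (2 * k + 1))
          = insert (ν (2 * k) + 1) (Finset.Icc (ν (2 * k) + 2) (ν (2 * k + 1))) := by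
        ext i
        simp only [Finset.mem_Icc, Finset.mem_insert]
        omega
      rw [hset, Finset.sum_insert (by simp only [Finset.mem_Icc]; omega)]
    have hβodd' := hβodd k (by omega)
    have hs2 : ∑ i ∈ Finset.Icc (ν (2 * k) + 2) (ν (2 * k + 1)), γ i
        = -β (2 * k + 1) - γ (ν (2 * k) + 1) := by
      rw [hβodd']
      linarith [hsum]
    have hwr : f (x (ν (2 * k))) - β (2 * k + 1) ≤ x (ν (2 * k + 1)) := by
      linarith [hq1, hw, hs2]
    have hvδ : x (ν (2 * k)) < δ := hN _ hqN
    have hxp0 : 0 ≤ x (ν (2 * k - 1)) := hxnn _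
    rcases lt_or_ge (β (2 * k)) (x (ν (2 * k))) with ha | ha
    · have hder' := hder (β (2 * k)) (x (ν (2 * k)) - β (2 * k))
        ⟨hβp.1, lt_of_lt_of_le hβsmall hδle1⟩
        ⟨by linarith, by linarith⟩
      have he : β (2 * k) + (x (ν (2 * k)) - β (2 * k)) = x (ν (2 * k)) := by ring
      rw [he] at hder'
      linarith
    · have h1 : x (ν (2 * k)) = β (2 * k) := by linarith
      rw [h1] at hwr
      linarith
  have mono : ∀ k, k₀ ≤ k → x (ν (2 * k + 1)) < x (ν (2 * (k + 1) + 1)) := by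
    intro k hk
    have h := main (k + 1) (by omega)
    have he : 2 * (k + 1) - 1 = 2 * k + 1 := by omega
    rwa [he] at h
  have hc : 0 < x (ν (2 * (k₀ + 1) + 1)) :=
    lt_of_le_of_lt (hxnn (ν (2 * k₀ + 1))) (mono k₀ le_rfl)
  have hlb : ∀ k, k₀ + 1 ≤ k → x (ν (2 * (k₀ + 1) + 1)) ≤ x (ν (2 * k + 1)) := by
    intro k hk
    induction k, hk using Nat.le_induction with
    | base => exact le_rfl
    | succ n hn ih => exact ih.trans (mono n (by omega)).le
  have hg0 : Filter.Tendsto (fun k => x (ν (2 * k + 1))) Filter.atTop (nhds 0) :=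
    hxlim.comp hνtend
  have hle : x (ν (2 * (k₀ + 1) + 1)) ≤ 0 :=
    ge_of_tendsto hg0 (Filter.eventually_atTop.2 ⟨k₀ + 1, hlb⟩)
  linarith
end

section
/- Let f satisfy (A1)-(A2) and let (γ_n) be a bounded real sequence with lim_{n→∞} γ_n = 0. Suppose f is increasing on [0, c] for some c > 0 and inf_{x > c} f(x) ≥ μ for some μ > 0. Let γ̃ := sup_{n∈ℕ} max{−γ_n, 0}, assume the set {x > 0 : f(x) − x > γ̃} is nonempty, define b(γ̃) := inf{x > 0 : f(x) − x > γ̃}, and assume γ̃ + b(γ̃) < μ. Then every solution (x_n) of x_{n+1} = max{f(x_n) + γ_{n+1}, 0} with initial value x_0 > b(γ̃) satisfies x_n ≥ b(γ̃) for all n ∈ ℕ. -/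
/-- Proposition `prop:invalpar`: if `f` is increasing on `[0, c]`, `f ≥ μ` on `(c, ∞)`,
the negative parts of the bounded perturbations have supremum `γ̃` with
`γ̃ + b(γ̃) < μ`, where `b(γ̃) = inf{x > 0 : f(x) - x > γ̃}`, then every solution with
`x_0 > b(γ̃)` stays `≥ b(γ̃)`. -/
theorem stmt_8 (f : ℝ → ℝ) (K : ℝ)
    (hf_cont : ContinuousOn f (Set.Ici 0))
    (hf_maps : ∀ x : ℝ, 0 ≤ x → 0 ≤ f x)
    (hf0 : f 0 = 0)
    (hf_pos : ∀ x : ℝ, 0 < x → 0 < f x)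
    (hK : 0 < K) (hfK : f K = K)
    (hbelow : ∀ x : ℝ, 0 < x → x < K → x < f x)
    (habove : ∀ x : ℝ, K < x → f x < x)
    (γ : ℕ → ℝ) (C : ℝ) (hbdd : ∀ n : ℕ, |γ n| ≤ C)
    (hγ : Filter.Tendsto γ Filter.atTop (nhds 0))
    (c : ℝ) (hc : 0 < c) (hmono : StrictMonoOn f (Set.Icc 0 c))
    (μ : ℝ) (hμ : 0 < μ) (hinff : ∀ y : ℝ, c < y → μ ≤ f y)
    (tg b : ℝ)
    (htg : tg = ⨆ n : ℕ, max (-γ n) 0)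
    (hne : {y : ℝ | 0 < y ∧ tg < f y - y}.Nonempty)
    (hb : b = sInf {y : ℝ | 0 < y ∧ tg < f y - y})
    (hcond : tg + b < μ)
    (x : ℕ → ℝ) (hx0 : b < x 0)
    (hrec : ∀ n : ℕ, x (n + 1) = max (f (x n) + γ (n + 1)) 0) :
    ∀ n : ℕ, b ≤ x n := by
  set S : Set ℝ := {y : ℝ | 0 < y ∧ tg < f y - y} with hS
  have hbdS : BddBelow S := ⟨0, fun y hy => hy.1.le⟩
  have hb0 : 0 ≤ b := hb ▸ le_csInf hne (fun y hy => hy.1.le)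
  have hbddA : BddAbove (Set.range fun n : ℕ => max (-γ n) 0) := by
    refine ⟨max C 0, ?_⟩
    rintro _ ⟨n, rfl⟩
    exact max_le_max ((neg_le_abs _).trans (hbdd n)) le_rfl
  have hγge : ∀ n : ℕ, -tg ≤ γ n := by
    intro n
    have h1 : max (-γ n) 0 ≤ tg := htg ▸ le_ciSup hbddA n
    have := (le_max_left (-γ n) 0).trans h1
    linarith
  have htg0 : 0 ≤ tg := le_trans (le_max_right (-γ 0) 0) (htg ▸ le_ciSup hbddA 0)
  -- key: for all z ≥ b, f z ≥ b + tg
  have key : ∀ z : ℝ, b ≤ z → b + tg ≤ f z := by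
    intro z hz
    rcases le_or_gt z c with hzc | hzc
    · rcases eq_or_lt_of_le hz with rfl | hbz
      · -- z = b : continuity argument
        obtain ⟨u, hu_anti, hu_tend, hu_mem⟩ := exists_seq_tendsto_sInf hne hbdS
        rw [← hb] at hu_tend
        have hfu : Filter.Tendsto (fun k => f (u k)) Filter.atTop (nhds (f b)) := by
          have h1 : Filter.Tendsto u Filter.atTop (nhdsWithin b (Set.Ici 0)) :=
            tendsto_nhdsWithin_of_tendsto_nhds_of_eventually_within _ hu_tend
              (Filter.Eventually.of_forall fun k => (hu_mem k).1.le)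
          exact ((hf_cont b hb0).tendsto.comp h1)
        have hlim : Filter.Tendsto (fun k => u k + tg) Filter.atTop (nhds (b + tg)) :=
          hu_tend.add tendsto_const_nhds
        have : b + tg ≤ f b := by
          refine le_of_tendsto_of_tendsto hlim hfu (Filter.Eventually.of_forall fun k => ?_)
          have := (hu_mem k).2
          simp only [Pi.le_def]
          linarith
        linarith
      · -- b < z ≤ c
        obtain ⟨y, hyS, hyz⟩ : ∃ y ∈ S, y < z := exists_lt_of_csInf_lt hne (hb ▸ hbz)
        have hyb : b ≤ y := hb ▸ csInf_le hbdS hyS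
        have hfy : y + tg < f y := by have := hyS.2; linarith
        have hmle : f y ≤ f z := (hmono.monotoneOn) ⟨hyS.1.le, hyz.le.trans hzc⟩
          ⟨hb0.trans hz, hzc⟩ hyz.le
        linarith
    · -- c < z
      have := hinff z hzc
      linarith
  intro n
  induction n with
  | zero => exact hx0.le
  | succ n ih =>
    have h1 : b + tg ≤ f (x n) := key _ ih
    have h2 : -tg ≤ γ (n + 1) := hγge (n + 1)
    calc b ≤ f (x n) + γ (n + 1) := by linarith
    _ ≤ max (f (x n) + γ (n + 1)) 0 := le_max_left _ _
    _ = x (n + 1) := (hrec n).symm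
end

section
/- Let f : [0,∞) → [0,∞) be continuous with f(0) = 0, f(K) = K for some K > 0, and f(x) > x for all x ∈ (0,K). Let (σ_n) be positive reals and (ξ_n)_{n∈ℕ} real random variables on a probability space (Ω, F, P) such that, almost surely, limsup_{n→∞} Σ_{k=1}^{n} σ_k ξ_{k+1} = ∞. Then every solution (x_n) of the stochastic difference equation x_{n+1} = max{f(x_n) + σ_n ξ_{n+1}, 0} with initial value x_0 > 0 satisfies P{ω ∈ Ω : lim_{n→∞} x_n(ω) = 0} = 0. -/
open MeasureTheory
open scoped ENNReal ProbabilityTheory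

/-- Lemma `lem:+infty`: if almost surely `limsup_n ∑_{k=1}^n σ_k ξ_{k+1} = ∞`, then
for `f` continuous with `f(0) = 0`, `f(K) = K`, `f(x) > x` on `(0,K)`, every solution
of `x_{n+1} = max{f(x_n) + σ_n ξ_{n+1}, 0}` with `x_0 > 0` tends to zero with
probability zero. -/
theorem stmt_12 {Ω : Type*} [MeasureSpace Ω] [IsProbabilityMeasure (ℙ : Measure Ω)]
    (f : ℝ → ℝ) (K : ℝ)
    (hf_cont : ContinuousOn f (Set.Ici 0))
    (hf_maps : ∀ y : ℝ, 0 ≤ y → 0 ≤ f y)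
    (hf0 : f 0 = 0)
    (hK : 0 < K) (hfK : f K = K)
    (hbelow : ∀ y : ℝ, 0 < y → y < K → y < f y)
    (σ : ℕ → ℝ) (hσpos : ∀ n, 0 < σ n)
    (ξ : ℕ → Ω → ℝ) (hmeas : ∀ n, Measurable (ξ n))
    (hlimsup : ∀ᵐ ω ∂ℙ, ∀ C : ℝ, ∃ᶠ n in Filter.atTop,
      C < ∑ k ∈ Finset.Icc 1 n, σ k * ξ (k + 1) ω)
    (x : ℕ → Ω → ℝ) (hx0 : ∀ ω, 0 < x 0 ω)
    (hrec : ∀ n ω, x (n + 1) ω = max (f (x n ω) + σ n * ξ (n + 1) ω) 0) :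
    ℙ {ω : Ω | Filter.Tendsto (fun n => x n ω) Filter.atTop (nhds 0)} = 0 := by
  refine measure_mono_null (t := {ω : Ω | ¬ ∀ C : ℝ, ∃ᶠ n in Filter.atTop,
      C < ∑ k ∈ Finset.Icc 1 n, σ k * ξ (k + 1) ω}) ?_ ?_
  · intro ω hω hωgood
    -- hω : x n ω → 0, hωgood : frequently big partial sums. Derive False.
    have hnn : ∀ n, 0 ≤ x n ω := by
      intro n
      cases n with
      | zero => exact (hx0 ω).le
      | succ m => rw [hrec m ω]; exact le_max_right _ _
    -- find N ≥ 1 with x n ω < K for all n ≥ N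
    have := Filter.Tendsto.eventually_lt_const hK hω
    rw [Filter.eventually_atTop] at this
    obtain ⟨N₀, hN₀⟩ := this
    set N := max N₀ 1 with hNdef
    have hN1 : 1 ≤ N := le_max_right _ _
    have hsmall : ∀ n, N ≤ n → x n ω < K := fun n hn =>
      hN₀ n (le_trans (le_max_left _ _) hn)
    -- telescoping lower bound
    have key : ∀ n, N ≤ n →
        x N ω + ∑ k ∈ Finset.Ico N n, σ k * ξ (k + 1) ω ≤ x n ω := by
      intro n hn
      induction n, hn using Nat.le_induction with
      | base => simp
      | succ n hn ih =>
        have hfx : x n ω ≤ f (x n ω) := by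
          rcases (hnn n).eq_or_lt with h | h
          · rw [← h, hf0]
          · exact (hbelow _ h (hsmall n hn)).le
        have h1 : x n ω + σ n * ξ (n + 1) ω ≤ x (n + 1) ω := by
          rw [hrec n ω]
          exact le_trans (by linarith) (le_max_left _ _)
        rw [Finset.sum_Ico_succ_top hn]
        linarith
    -- use the frequently hypothesis with a large C
    set Spre : ℝ := ∑ k ∈ Finset.Icc 1 (N - 1), σ k * ξ (k + 1) ω with hSpre
    obtain ⟨n, hnbig, hnN⟩ := ((hωgood (Spre + K)).and_eventually
      (Filter.eventually_ge_atTop N)).exists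
    -- split the sum
    have hsplit : Spre + ∑ k ∈ Finset.Ico N (n + 1), σ k * ξ (k + 1) ω
        = ∑ k ∈ Finset.Icc 1 n, σ k * ξ (k + 1) ω := by
      have h1 : Finset.Icc 1 (N - 1) = Finset.Ico 1 N := by
        rw [← Finset.Ico_add_one_right_eq_Icc]; congr 1; omega
      have h2 : Finset.Icc 1 n = Finset.Ico 1 (n + 1) := (Finset.Ico_add_one_right_eq_Icc 1 n).symm
      rw [hSpre, h1, h2]
      exact Finset.sum_Ico_consecutive _ hN1 (Nat.le_succ_of_le hnN)
    have hkey := key (n + 1) (Nat.le_succ_of_le hnN)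
    have hlt := hsmall (n + 1) (Nat.le_succ_of_le hnN)
    have hxN := hnn N
    -- x (n+1) ω ≥ x N ω + (S n - Spre) > K, contradiction
    have : ∑ k ∈ Finset.Ico N (n + 1), σ k * ξ (k + 1) ω
        = (∑ k ∈ Finset.Icc 1 n, σ k * ξ (k + 1) ω) - Spre := by linarith
    linarith
  · have := hlimsup
    rw [ae_iff] at this
    exact this
end

section
/- Let f satisfy (A1)-(A2). Let (ξ_n)_{n∈ℕ} be independent, identically distributed real random variables on a probability space (Ω, F, P), each having an even density φ (φ(−x) = φ(x)) with φ(x) > 0 for x ∈ (−1,1) and φ(x) = 0 for x ∉ [−1,1]. Let (σ_n) be positive reals with Σ_n σ_n² < ∞. Then every solution (x_n) of x_{n+1} = max{f(x_n) + σ_n ξ_{n+1}, 0} with initial value x_0 > 0 satisfies P{ω ∈ Ω : lim_{n→∞} x_n(ω) = 0} ≤ 1/2. -/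
/-!
Along a path with `x n → 0`, eventually `0 ≤ x n < K`, where `f (x n) ≥ x n`; hence
`x m ≥ x n + ∑_{k=n}^{m-1} σ k ξ (k+1)`, and the tail sums of `σ k ξ (k+1)` have
`limsup ≤ 0`. Since the `ξ n` are i.i.d. and symmetric, the sequence `(-ξ n)` has the same
law as `(ξ n)`, so the same event for `-ξ` has the same probability. Both events together
force `σ n ξ (n+1) = 0` eventually, which has probability zero because `ξ` has a density.
Two events of equal probability with null intersection have probability at most `1/2`.
-/

open MeasureTheory ProbabilityTheory Filter Finset Topology
open scoped ENNReal

/-- The tolerance ranges over `ℚ` so that the event is measurable in `a`. -/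
def TailSumsLimsupNonpos (a : ℕ → ℝ) : Prop :=
  ∀ᶠ n in atTop, ∀ q : ℚ, 0 < q → ∀ᶠ m in atTop, ∑ k ∈ Ico n m, a k ≤ q

lemma measurableSet_tailSumsLimsupNonpos :
    MeasurableSet {a : ℕ → ℝ | TailSumsLimsupNonpos a} := by
  simp only [TailSumsLimsupNonpos, eventually_atTop]
  measurability

namespace TailSumsLimsupNonpos

variable {a : ℕ → ℝ}

lemma eventually_nonpos (ha : TailSumsLimsupNonpos a) (hna : TailSumsLimsupNonpos (-a)) :
    ∀ᶠ n in atTop, a n ≤ 0 := by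
  filter_upwards [ha, (tendsto_add_atTop_nat 1).eventually hna] with n han hnan
  refine le_of_forall_lt_rat_imp_le fun q hq => ?_
  have hq2 : 0 < q / 2 := half_pos (by exact_mod_cast hq)
  obtain ⟨m, hsum, hsum', hnm⟩ :=
    ((han _ hq2).and ((hnan _ hq2).and (eventually_gt_atTop n))).exists
  rw [sum_eq_sum_Ico_succ_bot hnm] at hsum
  simp only [Pi.neg_apply, sum_neg_distrib] at hsum'
  push_cast at hsum hsum'
  linarith

lemma eventually_eq_zero (ha : TailSumsLimsupNonpos a) (hna : TailSumsLimsupNonpos (-a)) :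
    ∀ᶠ n in atTop, a n = 0 := by
  have hnna : TailSumsLimsupNonpos (-(-a)) := by rwa [neg_neg]
  filter_upwards [ha.eventually_nonpos hna, hna.eventually_nonpos hnna] with n hle hge
  exact le_antisymm hle (neg_nonpos.1 hge)

end TailSumsLimsupNonpos

lemma add_sum_Ico_le_of_forall_add_le {x a : ℕ → ℝ} {N : ℕ}
    (hstep : ∀ k, N ≤ k → x k + a k ≤ x (k + 1)) {n m : ℕ} (hn : N ≤ n) (hnm : n ≤ m) :
    x n + ∑ k ∈ Ico n m, a k ≤ x m := by
  induction m, hnm using Nat.le_induction with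
  | base => simp
  | succ m hnm ih =>
    rw [sum_Ico_succ_top hnm]
    linarith [hstep m (hn.trans hnm)]

lemma tailSumsLimsupNonpos_of_tendsto_zero {x a : ℕ → ℝ} (hx : Tendsto x atTop (𝓝 0))
    (hx_nonneg : ∀ᶠ n in atTop, 0 ≤ x n) (hstep : ∀ᶠ n in atTop, x n + a n ≤ x (n + 1)) :
    TailSumsLimsupNonpos a := by
  obtain ⟨N, hN⟩ := eventually_atTop.1 (hx_nonneg.and hstep)
  filter_upwards [eventually_ge_atTop N] with n hn q hq
  have hq' : (0 : ℝ) < q := by exact_mod_cast hq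
  filter_upwards [eventually_ge_atTop n, hx.eventually (gt_mem_nhds hq')] with m hnm hxm
  linarith [add_sum_Ico_le_of_forall_add_le (fun k hk => (hN k hk).2) hn hnm, (hN n hn).1]

lemma tailSumsLimsupNonpos_of_max_recursion {f : ℝ → ℝ} {K : ℝ} (hf0 : f 0 = 0) (hK : 0 < K)
    (hbelow : ∀ y : ℝ, 0 < y → y < K → y < f y) {x a : ℕ → ℝ}
    (hrec : ∀ n, x (n + 1) = max (f (x n) + a n) 0) (hx : Tendsto x atTop (𝓝 0)) :
    TailSumsLimsupNonpos a := by
  have hx_nonneg : ∀ᶠ n in atTop, 0 ≤ x n := eventually_atTop.2 ⟨1, fun n hn => by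
    obtain ⟨k, rfl⟩ := Nat.exists_eq_add_of_le' hn
    exact hrec k ▸ le_max_right _ _⟩
  refine tailSumsLimsupNonpos_of_tendsto_zero hx hx_nonneg ?_
  filter_upwards [hx_nonneg, hx.eventually (gt_mem_nhds hK)] with n hxn hxK
  have hfx : x n ≤ f (x n) := by
    rcases hxn.eq_or_lt with hx0 | hxpos
    · rw [← hx0, hf0]
    · exact (hbelow _ hxpos hxK).le
  rw [hrec]
  exact (add_le_add_left hfx _).trans (le_max_left _ _)

lemma withDensity_map_neg {G : Type*} [MeasurableSpace G] [InvolutiveNeg G] [MeasurableNeg G]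
    (μ : Measure G) [μ.IsNegInvariant] {φ : G → ℝ≥0∞} (hφ : ∀ y, φ (-y) = φ y) :
    (μ.withDensity φ).map Neg.neg = μ.withDensity φ := by
  ext s hs
  rw [Measure.map_apply measurable_neg hs, withDensity_apply _ (measurable_neg hs),
    withDensity_apply _ hs, ← (Measure.measurePreserving_neg μ).setLIntegral_comp_preimage_emb
    (MeasurableEquiv.neg G).measurableEmbedding φ s]
  simp only [hφ]

lemma iIndepFun.map_neg_eq_map {Ω : Type*} [MeasurableSpace Ω] {P : Measure Ω}
    {ξ : ℕ → Ω → ℝ} (hmeas : ∀ n, Measurable (ξ n)) (hindep : iIndepFun ξ P)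
    (hsymm : ∀ n, P.map (fun ω => -ξ n ω) = P.map (ξ n)) :
    P.map (fun ω n => -ξ n ω) = P.map (fun ω n => ξ n ω) := by
  refine ((hindep.comp (fun _ => Neg.neg) fun _ => measurable_neg).map_fun_eq_infinitePi_map
      fun n => (hmeas n).neg).trans ?_
  rw [hindep.map_fun_eq_infinitePi_map hmeas]
  exact congrArg _ (funext hsymm)

lemma measure_le_half_of_measure_eq_of_inter_null {α : Type*} [MeasurableSpace α]
    {μ : Measure α} [IsProbabilityMeasure μ] {s t : Set α} (ht : MeasurableSet t)
    (hst : μ s = μ t) (hnull : μ (s ∩ t) = 0) : μ s ≤ 1 / 2 := by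
  rw [ENNReal.le_div_iff_mul_le (Or.inl two_ne_zero) (Or.inl ENNReal.ofNat_ne_top), mul_two]
  calc μ s + μ s = μ (s ∪ t) + μ (s ∩ t) := by rw [measure_union_add_inter s ht, hst]
    _ ≤ 1 := by rw [hnull, add_zero]; exact prob_le_one

lemma measure_preimage_le_half_of_map_neg_eq {Ω E : Type*} [MeasurableSpace Ω]
    [MeasurableSpace E] [Neg E] [MeasurableNeg E] {P : Measure Ω} [IsProbabilityMeasure P]
    {X : Ω → E} (hX : Measurable X) (hsymm : P.map (fun ω => -X ω) = P.map X)
    {A : Set E} (hA : MeasurableSet A) (hnull : P {ω | X ω ∈ A ∧ -X ω ∈ A} = 0) :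
    P (X ⁻¹' A) ≤ 1 / 2 := by
  refine measure_le_half_of_measure_eq_of_inter_null (hX.neg hA) ?_ hnull
  rw [← Measure.map_apply hX hA, ← hsymm, Measure.map_apply (f := fun ω => -X ω) hX.neg hA]
  rfl

theorem stmt_18_general {Ω : Type*} [MeasureSpace Ω] [IsProbabilityMeasure (ℙ : Measure Ω)]
    (f : ℝ → ℝ) (K : ℝ)
    (hf0 : f 0 = 0)
    (hK : 0 < K)
    (hbelow : ∀ y : ℝ, 0 < y → y < K → y < f y)
    (ξ : ℕ → Ω → ℝ) (hmeas : ∀ n, Measurable (ξ n))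
    (hindep : ProbabilityTheory.iIndepFun ξ ℙ)
    (φ : ℝ → ℝ≥0∞)
    (hdens : ∀ n, Measure.map (ξ n) ℙ = volume.withDensity φ)
    (hφeven : ∀ y : ℝ, φ (-y) = φ y)
    (σ : ℕ → ℝ) (hσpos : ∀ n, 0 < σ n)
    (x : ℕ → Ω → ℝ)
    (hrec : ∀ n ω, x (n + 1) ω = max (f (x n ω) + σ n * ξ (n + 1) ω) 0) :
    ℙ {ω : Ω | Filter.Tendsto (fun n => x n ω) Filter.atTop (nhds 0)} ≤ 1 / 2 := by
  set A := {u : ℕ → ℝ | TailSumsLimsupNonpos fun k => σ k * u (k + 1)}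
  have hA : MeasurableSet A := measurableSet_tailSumsLimsupNonpos.preimage (by fun_prop)
  have hsymm := iIndepFun.map_neg_eq_map hmeas hindep fun n => by
    change Measure.map (Neg.neg ∘ ξ n) ℙ = _
    rw [← Measure.map_map measurable_neg (hmeas n), hdens, withDensity_map_neg volume hφeven]
  have hzero : ∀ n, ℙ (ξ n ⁻¹' {0}) = 0 := fun n => by
    rw [← Measure.map_apply (hmeas n) (measurableSet_singleton 0), hdens]
    exact withDensity_absolutelyContinuous _ _ (measure_singleton 0)
  have hnull : ℙ {ω | (ξ · ω) ∈ A ∧ -(ξ · ω) ∈ A} = 0 := by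
    refine measure_mono_null (fun ω ⟨hpos, hneg⟩ => ?_) (measure_iUnion_null hzero)
    have hneg' : TailSumsLimsupNonpos (-fun k => σ k * ξ (k + 1) ω) := by
      have hneg : TailSumsLimsupNonpos fun k => σ k * -ξ (k + 1) ω := hneg
      convert hneg using 1
      ext k
      simp
    obtain ⟨n, hn⟩ := (hpos.eventually_eq_zero hneg').exists
    exact Set.mem_iUnion.2 ⟨n + 1, (mul_eq_zero.1 hn).resolve_left (hσpos n).ne'⟩
  refine (measure_mono fun ω hω => ?_).trans
    (measure_preimage_le_half_of_map_neg_eq (measurable_pi_lambda _ hmeas) hsymm hA hnull)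
  exact tailSumsLimsupNonpos_of_max_recursion hf0 hK hbelow (fun n => hrec n ω) hω

/-- Lemma `lem:<12`: under (A1)-(A2), for i.i.d. noises with an even density positive
on `(-1,1)` and vanishing outside `[-1,1]`, and square-summable positive amplitudes,
every solution of `x_{n+1} = max{f(x_n) + σ_n ξ_{n+1}, 0}` with `x_0 > 0` tends to
zero with probability at most `1/2`. -/
theorem stmt_18 {Ω : Type*} [MeasureSpace Ω] [IsProbabilityMeasure (ℙ : Measure Ω)]
    (f : ℝ → ℝ) (K : ℝ)
    (hf_cont : ContinuousOn f (Set.Ici 0))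
    (hf_maps : ∀ y : ℝ, 0 ≤ y → 0 ≤ f y)
    (hf0 : f 0 = 0)
    (hf_pos : ∀ y : ℝ, 0 < y → 0 < f y)
    (hK : 0 < K) (hfK : f K = K)
    (hbelow : ∀ y : ℝ, 0 < y → y < K → y < f y)
    (habove : ∀ y : ℝ, K < y → f y < y)
    (ξ : ℕ → Ω → ℝ) (hmeas : ∀ n, Measurable (ξ n))
    (hindep : ProbabilityTheory.iIndepFun ξ ℙ)
    (φ : ℝ → ℝ≥0∞)
    (hdens : ∀ n, Measure.map (ξ n) ℙ = volume.withDensity φ)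
    (hφpos : ∀ y ∈ Set.Ioo (-1 : ℝ) 1, 0 < φ y)
    (hφzero : ∀ y ∉ Set.Icc (-1 : ℝ) 1, φ y = 0)
    (hφeven : ∀ y : ℝ, φ (-y) = φ y)
    (σ : ℕ → ℝ) (hσpos : ∀ n, 0 < σ n)
    (hσl2 : Summable (fun n => (σ n) ^ 2))
    (x : ℕ → Ω → ℝ) (hx0 : ∀ ω, 0 < x 0 ω)
    (hrec : ∀ n ω, x (n + 1) ω = max (f (x n ω) + σ n * ξ (n + 1) ω) 0) :
    ℙ {ω : Ω | Filter.Tendsto (fun n => x n ω) Filter.atTop (nhds 0)} ≤ 1 / 2 :=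
  stmt_18_general f K hf0 hK hbelow ξ hmeas hindep φ hdens hφeven σ hσpos x hrec
end
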